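/- arXiv:2211.17176 — 6 statements merged into one kernel-verified Lean document; each statement's English description precedes it below -/
import Mathlib

section
/- Let Ω = (a,b) be a non-empty bounded open interval, let Ω₀ = (a₀,b₀) be an open interval with a < a₀ < b₀ < b, and let 1 ≤ p ≤ 4. Let ε_n be a sequence of positive reals with ε_n → 0⁺. If u_n ∈ W^{2,p}(Ω) is a sequence with sup_{n∈ℕ} ∫_Ω ε_n^{-1}(u_n²−1)² + ε_n³|u_n''|² dx < ∞, then there exists a universal constant C' > 0 (independent of the sequence and the intervals) such that ∫_{Ω₀} ε_n|u_n'|² dx ≤ C' ∫_Ω ε_n^{-1}(u_n²−1)² + ε_n³|u_n''|² dx for all sufficiently large n. -/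
open MeasureTheory Set Filter Topology
open scoped ENNReal NNReal

noncomputable section

/-- `u` (together with chosen derivative functions `u'`, `u''`) belongs to the Sobolev
space `W^{2,q}` of the set `s ⊆ ℝ`, encoded through the `ACL` characterization:
`u` is differentiable on `s` with derivative `u'`, `u'` is (locally) absolutely
continuous on `s` with density `u''`, and `u, u', u'' ∈ L^q(s)`. -/
def IsW2On (s : Set ℝ) (q : ℝ≥0∞) (u u' u'' : ℝ → ℝ) : Prop :=
  (∀ x ∈ s, HasDerivAt u (u' x) x) ∧
  (∀ x ∈ s, ∀ y ∈ s, Set.uIcc x y ⊆ s → u' y - u' x = ∫ t in x..y, u'' t) ∧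
  MeasureTheory.MemLp u q (volume.restrict s) ∧
  MeasureTheory.MemLp u' q (volume.restrict s) ∧
  MeasureTheory.MemLp u'' q (volume.restrict s)

/-- `W^{1,q}` of a set `s ⊆ ℝ`, via the ACL characterization: `u` is (locally)
absolutely continuous on `s` with density `u'`, and `u, u' ∈ L^q(s)`. -/
def IsW1On (s : Set ℝ) (q : ℝ≥0∞) (u u' : ℝ → ℝ) : Prop :=
  (∀ x ∈ s, ∀ y ∈ s, Set.uIcc x y ⊆ s → u y - u x = ∫ t in x..y, u' t) ∧
  MeasureTheory.MemLp u q (volume.restrict s) ∧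
  MeasureTheory.MemLp u' q (volume.restrict s)

/-- The essential pointwise variation of `u` on `s`: the infimum of the pointwise
variations of all representatives of `u`. -/
def essVar (s : Set ℝ) (u : ℝ → ℝ) : ℝ≥0∞ :=
  ⨅ (v : ℝ → ℝ) (_ : v =ᵐ[volume.restrict s] u), eVariationOn v s

/-- Convergence `u n → v` in `L^p(s)`. -/
def TendstoLp (s : Set ℝ) (p : ℝ) (u : ℕ → ℝ → ℝ) (v : ℝ → ℝ) : Prop :=
  Tendsto (fun n => eLpNorm (fun x => u n x - v x) (ENNReal.ofReal p)
    (volume.restrict s)) atTop (𝓝 0)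

/-- The functional `Φ(v) = (∫₀¹ (v²-1)² dy)^{3/4} (∫₀¹ |v''|² dy)^{1/4}`. -/
def PhiE (v v'' : ℝ → ℝ) : ℝ≥0∞ :=
  (∫⁻ y in Set.Ioo (0:ℝ) 1, ENNReal.ofReal (((v y) ^ 2 - 1) ^ 2)) ^ ((3:ℝ)/4) *
  (∫⁻ y in Set.Ioo (0:ℝ) 1, ENNReal.ofReal ((v'' y) ^ 2)) ^ ((1:ℝ)/4)

/-- The set of values of `Φ` on the family `𝒥`. -/
def JVals (p : ℝ) : Set ℝ≥0∞ :=
  {r | ∃ v v' v'' : ℝ → ℝ, IsW2On (Set.Ioo 0 1) (ENNReal.ofReal p) v v' v'' ∧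
    Tendsto v (𝓝[>] (0:ℝ)) (𝓝 (-1)) ∧ Tendsto v (𝓝[<] (1:ℝ)) (𝓝 1) ∧
    Tendsto v' (𝓝[>] (0:ℝ)) (𝓝 0) ∧ Tendsto v' (𝓝[<] (1:ℝ)) (𝓝 0) ∧
    r = PhiE v v''}

/-- `α = (2/3^{3/4}) inf_{v ∈ 𝒥} Φ(v)`. -/
def alphaE (p : ℝ) : ℝ≥0∞ := ENNReal.ofReal (2 / (3:ℝ) ^ ((3:ℝ)/4)) * sInf (JVals p)

/-- The set of values of `Φ` on the family `𝒥'(t)`. -/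
def JpVals (p t : ℝ) : Set ℝ≥0∞ :=
  {r | ∃ v v' v'' : ℝ → ℝ, IsW2On (Set.Ioo 0 1) (ENNReal.ofReal p) v v' v'' ∧
    Tendsto v (𝓝[>] (0:ℝ)) (𝓝 (-1)) ∧ Tendsto v (𝓝[<] (1:ℝ)) (𝓝 t) ∧
    Tendsto v' (𝓝[>] (0:ℝ)) (𝓝 0) ∧
    r = PhiE v v''}

/-- `β(t) = (4/3^{3/4}) inf_{v ∈ 𝒥'(t)} Φ(v)`, as an extended real. -/
def betaE (p t : ℝ) : ℝ≥0∞ := ENNReal.ofReal (4 / (3:ℝ) ^ ((3:ℝ)/4)) * sInf (JpVals p t)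

/-- `Ψ(v) = ∫_{-∞}^0 (v²-1)² + |v''|² dx`. -/
def PsiE (v v'' : ℝ → ℝ) : ℝ≥0∞ :=
  ∫⁻ x in Set.Iio (0:ℝ), ENNReal.ofReal (((v x) ^ 2 - 1) ^ 2 + (v'' x) ^ 2)

/-- Membership in the family `𝒥'_∞(t)`: `v ∈ W^{2,∞}(-∞,0)`, `v(0⁻) = t`, and
`v ≡ -1` near `-∞`. -/
def MemJInf (t : ℝ) (v v' v'' : ℝ → ℝ) : Prop :=
  IsW2On (Set.Iio 0) ⊤ v v' v'' ∧ Tendsto v (𝓝[<] (0:ℝ)) (𝓝 t) ∧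
  ∃ L > (0:ℝ), ∀ x ≤ -L, v x = -1

/-- The set of values of `Ψ` on the family `𝒥'_∞(t)`. -/
def PsiVals (t : ℝ) : Set ℝ≥0∞ :=
  {r | ∃ v v' v'' : ℝ → ℝ, MemJInf t v v' v'' ∧ r = PsiE v v''}

/-- The set of values of `Ψ` on `{v ∈ 𝒥'_∞(t) : L_v ≤ Lmax}`. -/
def PsiValsL (t Lmax : ℝ) : Set ℝ≥0∞ :=
  {r | ∃ v v' v'' : ℝ → ℝ, MemJInf t v v' v'' ∧ (∀ x ≤ -Lmax, v x = -1) ∧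
    r = PsiE v v''}

/-- The functional `F_ε` on `L^p((a,b))`: the common value of
`∫ ε⁻¹(v²-1)² + ε³|v''|²` over all `W^{2,p}` representatives `v` of `u`
(`+∞`, i.e. `sInf ∅`, when there is no such representative). -/
def Ffun (a b p ε : ℝ) (u : ℝ → ℝ) : ℝ≥0∞ :=
  sInf {r : ℝ≥0∞ | ∃ v v' v'' : ℝ → ℝ, v =ᵐ[volume.restrict (Set.Ioo a b)] u ∧
    IsW2On (Set.Ioo a b) (ENNReal.ofReal p) v v' v'' ∧
    r = ∫⁻ x in Set.Ioo a b,
      ENNReal.ofReal (ε⁻¹ * ((v x) ^ 2 - 1) ^ 2 + ε ^ 3 * (v'' x) ^ 2)}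

/-- The functional `G_ε` on `L^p((a,b))`, with boundary conditions
`v(a⁺) = aε`, `v(b⁻) = bε` imposed on the `W^{2,p}` representative. -/
def Gfun (a b p ε aε bε : ℝ) (u : ℝ → ℝ) : ℝ≥0∞ :=
  sInf {r : ℝ≥0∞ | ∃ v v' v'' : ℝ → ℝ, v =ᵐ[volume.restrict (Set.Ioo a b)] u ∧
    IsW2On (Set.Ioo a b) (ENNReal.ofReal p) v v' v'' ∧
    Tendsto v (𝓝[>] a) (𝓝 aε) ∧ Tendsto v (𝓝[<] b) (𝓝 bε) ∧
    r = ∫⁻ x in Set.Ioo a b,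
      ENNReal.ofReal (ε⁻¹ * ((v x) ^ 2 - 1) ^ 2 + ε ^ 3 * (v'' x) ^ 2)}



set_option maxHeartbeats 1000000

open scoped Pointwise

section AuxiliaryInterpolation

lemma abs_le_abs_sq_sub_one_add_one (t : ℝ) : |t| ≤ |t^2 - 1| + 1 := by
  rcases le_or_gt (|t|) 1 with h | h
  · linarith [abs_nonneg (t^2-1)]
  · have h2 : t^2 - 1 ≥ 0 := by nlinarith [abs_nonneg t, sq_abs t]
    rw [abs_of_nonneg h2]
    nlinarith [sq_abs t]

lemma abs_sub_one_le (t : ℝ) (ht : 0 ≤ t) : |t - 1| ≤ |t^2 - 1| := by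
  have h : t^2 - 1 = (t-1)*(t+1) := by ring
  rw [h, abs_mul]
  nlinarith [abs_nonneg (t-1), abs_of_nonneg (by linarith : (0:ℝ) ≤ t + 1)]

lemma contOn_of_ftc {a b c d : ℝ} {u' u'' : ℝ → ℝ}
    (h2 : ∀ x ∈ Ioo a b, ∀ y ∈ Ioo a b, Set.uIcc x y ⊆ Ioo a b → u' y - u' x = ∫ t in x..y, u'' t)
    (hint : IntegrableOn u'' (Ioo a b) volume)
    (hcd : Icc c d ⊆ Ioo a b) (hlt : c ≤ d) :
    ContinuousOn u' (Icc c d) := by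
  have hmemc : c ∈ Ioo a b := hcd ⟨le_refl c, hlt⟩
  have huIcc : uIcc c d = Icc c d := uIcc_of_le hlt
  have hint' : IntegrableOn u'' (uIcc c d) volume := by rw [huIcc]; exact hint.mono_set hcd
  have hcont : ContinuousOn (fun y => u' c + ∫ t in c..y, u'' t) (Icc c d) := by
    have := intervalIntegral.continuousOn_primitive_interval hint'
    rw [huIcc] at this
    exact continuousOn_const.add this
  refine hcont.congr ?_
  intro y hy
  have hmemy : y ∈ Ioo a b := hcd hy
  have hsub : uIcc c y ⊆ Ioo a b := (Set.ordConnected_Ioo).uIcc_subset hmemc hmemy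
  have h := h2 c hmemc y hmemy hsub
  show u' y = u' c + ∫ t in c..y, u'' t
  linarith

lemma sq_setIntegral_abs_le {s : Set ℝ} {f : ℝ → ℝ} {ℓ : ℝ}
    (hl : 0 ≤ ℓ) (hvol : volume s ≤ ENNReal.ofReal ℓ)
    (hf : IntegrableOn f s volume) (hf2 : IntegrableOn (fun t => (f t)^2) s volume) :
    (∫ t in s, |f t|)^2 ≤ ℓ * ∫ t in s, (f t)^2 := by
  set A := ∫ t in s, (f t)^2 with hA
  have hA0 : 0 ≤ A := integral_nonneg (fun t => sq_nonneg _)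
  have hvolfin : volume s < ⊤ := lt_of_le_of_lt hvol (by simp)
  have hvolR : (volume s).toReal ≤ ℓ := ENNReal.toReal_le_of_le_ofReal hl hvol
  rcases eq_or_lt_of_le hA0 with h0 | hpos
  · have hzero : (fun t => (f t)^2) =ᵐ[volume.restrict s] 0 :=
      (integral_eq_zero_iff_of_nonneg (μ := volume.restrict s)
        (fun t => sq_nonneg (f t)) hf2).mp h0.symm
    have habs : (fun t => |f t|) =ᵐ[volume.restrict s] 0 := by
      filter_upwards [hzero] with t ht
      simp only [Pi.zero_apply] at ht ⊢
      nlinarith [abs_nonneg (f t), sq_abs (f t)]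
    rw [integral_congr_ae habs]
    simp
    positivity
  · rcases eq_or_lt_of_le hl with hl0 | hlpos
    · have hz : volume s = 0 := le_antisymm (by simpa [← hl0] using hvol) zero_le
      rw [Measure.restrict_eq_zero.mpr hz]
      simp
      positivity
    · set σ := Real.sqrt (ℓ / A) with hσ
      have hσpos : 0 < σ := Real.sqrt_pos.mpr (div_pos hlpos hpos)
      have hσ2 : σ^2 = ℓ / A := Real.sq_sqrt (div_pos hlpos hpos).le
      have hconst : IntegrableOn (fun _ : ℝ => 1/σ) s volume :=
        integrableOn_const hvolfin.ne
      have hpt : ∀ t, |f t| ≤ (σ * (f t)^2 + 1/σ) / 2 := by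
        intro t
        have h1 : 0 ≤ (σ * |f t| - 1)^2 := sq_nonneg _
        have key : σ * |f t| ≤ (σ^2 * (f t)^2 + 1)/2 := by
          nlinarith [sq_abs (f t)]
        have h2 : σ * (σ * (f t)^2 + 1/σ) = σ^2 * (f t)^2 + 1 := by
          field_simp
        nlinarith [hσpos]
      have hint1 : ∫ t in s, |f t| ≤ ∫ t in s, (σ * (f t)^2 + 1/σ)/2 := by
        refine integral_mono hf.abs ?_ hpt
        exact ((hf2.const_mul σ).add hconst).div_const 2
      have hrhs : ∫ t in s, (σ * (f t)^2 + 1/σ)/2 ≤ (σ * A + ℓ/σ)/2 := by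
        rw [integral_div]
        have he : ∫ t in s, (σ * (f t)^2 + 1/σ) = σ * A + (volume s).toReal * (1/σ) := by
          rw [integral_add (hf2.const_mul σ) hconst, MeasureTheory.integral_const_mul, setIntegral_const]
          simp [smul_eq_mul]
          rfl
        rw [he]
        have h2 : (volume s).toReal * (1/σ) ≤ ℓ/σ := by
          rw [div_eq_mul_one_div ℓ σ]
          exact mul_le_mul_of_nonneg_right hvolR (by positivity)
        linarith
      have hnn : 0 ≤ ∫ t in s, |f t| := integral_nonneg (fun t => abs_nonneg _)
      have hfin : ∫ t in s, |f t| ≤ (σ * A + ℓ/σ)/2 := le_trans hint1 hrhs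
      have hsq : ((σ * A + ℓ/σ)/2)^2 = ℓ * A := by
        have hℓ : ℓ = σ^2 * A := by rw [hσ2]; field_simp
        rw [hℓ]
        field_simp
        ring
      calc (∫ t in s, |f t|)^2 ≤ ((σ * A + ℓ/σ)/2)^2 := by
            apply pow_le_pow_left₀ hnn hfin
        _ = ℓ * A := hsq

/-- If `v` has a steep positive derivative on `[w, w+ε]` and starts near `0`,
then it spends a time interval of length `≥ ε/12` above `3/2`. -/
lemma lemma_up {w δ ε : ℝ} {v v' : ℝ → ℝ}
    (hδ : 0 < δ) (hδε : δ ≤ ε/24) (hε : 0 < ε)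
    (hd : ∀ t ∈ Icc w (w+ε), HasDerivAt v (v' t) t)
    (hc : ContinuousOn v' (Icc w (w+ε)))
    (hw : |v w| ≤ 1/2)
    (hlo : ∀ t ∈ Icc w (w+ε), 1/(4*δ) ≤ v' t)
    (hhi : ∀ t ∈ Icc w (w+ε), v' t ≤ 3/(4*δ)) :
    ∃ p₁ p₂, p₁ ∈ Icc w (w+ε) ∧ p₂ ∈ Icc w (w+ε) ∧ ε/12 ≤ p₂ - p₁ ∧
      ∀ t ∈ Icc p₁ p₂, 3/2 ≤ v t := by
  have hwle : w ≤ w + ε := by linarith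
  have hvcont : ContinuousOn v (Icc w (w+ε)) :=
    fun t ht => (hd t ht).continuousAt.continuousWithinAt
  -- FTC with bounds
  have hftc : ∀ s ∈ Icc w (w+ε), ∀ t ∈ Icc w (w+ε), s ≤ t →
      v t - v s = ∫ r in s..t, v' r := by
    intro s hs t ht hst
    have hsub : uIcc s t ⊆ Icc w (w+ε) := by
      rw [uIcc_of_le hst]
      exact Icc_subset_Icc hs.1 ht.2
    refine (intervalIntegral.integral_eq_sub_of_hasDerivAt
      (fun r hr => hd r (hsub hr)) ((hc.mono hsub).intervalIntegrable)).symm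
  have hlb : ∀ s ∈ Icc w (w+ε), ∀ t ∈ Icc w (w+ε), s ≤ t →
      (t - s) * (1/(4*δ)) ≤ v t - v s := by
    intro s hs t ht hst
    rw [hftc s hs t ht hst]
    have hsub : uIcc s t ⊆ Icc w (w+ε) := by
      rw [uIcc_of_le hst]; exact Icc_subset_Icc hs.1 ht.2
    have h := intervalIntegral.integral_mono_on (μ := volume) hst
      (intervalIntegrable_const (c := 1/(4*δ)))
      ((hc.mono hsub).intervalIntegrable)
      (fun r hr => hlo r (hsub (by rwa [uIcc_of_le hst])))
    rw [intervalIntegral.integral_const, smul_eq_mul] at h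
    exact h
  have hub : ∀ s ∈ Icc w (w+ε), ∀ t ∈ Icc w (w+ε), s ≤ t →
      v t - v s ≤ (t - s) * (3/(4*δ)) := by
    intro s hs t ht hst
    rw [hftc s hs t ht hst]
    have hsub : uIcc s t ⊆ Icc w (w+ε) := by
      rw [uIcc_of_le hst]; exact Icc_subset_Icc hs.1 ht.2
    have h := intervalIntegral.integral_mono_on (μ := volume) hst
      ((hc.mono hsub).intervalIntegrable)
      (intervalIntegrable_const (c := 3/(4*δ)))
      (fun r hr => hhi r (hsub (by rwa [uIcc_of_le hst])))
    rw [intervalIntegral.integral_const, smul_eq_mul] at h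
    exact h
  set U := ε/(8*δ) with hU
  have hU3 : 3 ≤ U := by
    rw [hU, le_div_iff₀ (by positivity)]
    linarith
  have hmemw : w ∈ Icc w (w+ε) := ⟨le_refl w, hwle⟩
  have hmemw' : w + ε ∈ Icc w (w+ε) := ⟨hwle, le_refl _⟩
  have habs := abs_le.mp hw
  have hvtop : U ≤ v (w+ε) := by
    have := hlb w hmemw (w+ε) hmemw' hwle
    have h48 : (w + ε - w) * (1/(4*δ)) = 2*U := by
      rw [hU]; field_simp; ring
    rw [h48] at this
    linarith
  have hv0 : v w ≤ U/2 := by linarith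
  have hUU : U/2 ≤ U := by linarith
  -- IVT for the two levels
  have hiv := intermediate_value_Icc hwle hvcont
  obtain ⟨p₁, hp₁mem, hp₁⟩ := hiv ⟨hv0, le_trans hUU hvtop⟩
  obtain ⟨p₂, hp₂mem, hp₂⟩ := hiv ⟨le_trans hv0 hUU, hvtop⟩
  refine ⟨p₁, p₂, hp₁mem, hp₂mem, ?_, ?_⟩
  · -- ε/12 ≤ p₂ - p₁
    have hne : p₁ ≤ p₂ := by
      by_contra hlt
      push_neg at hlt
      have := hlb p₂ hp₂mem p₁ hp₁mem hlt.le
      rw [hp₁, hp₂] at this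
      nlinarith [mul_nonneg (by linarith : (0:ℝ) ≤ p₁ - p₂) (by positivity : (0:ℝ) ≤ 1/(4*δ))]
    have := hub p₁ hp₁mem p₂ hp₂mem hne
    rw [hp₁, hp₂] at this
    -- U - U/2 ≤ (p₂-p₁)*3/(4δ) ; U/2 = ε/(16δ)
    have hU2 : U - U/2 = ε/(16*δ) := by rw [hU]; ring
    rw [hU2] at this
    have hp : ε/(16*δ) / (3/(4*δ)) ≤ p₂ - p₁ := (div_le_iff₀ (by positivity)).mpr this
    calc ε/12 = ε/(16*δ) / (3/(4*δ)) := by field_simp; ring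
      _ ≤ p₂ - p₁ := hp
  · intro t ht
    have htmem : t ∈ Icc w (w+ε) := ⟨le_trans hp₁mem.1 ht.1, le_trans ht.2 hp₂mem.2⟩
    have := hlb p₁ hp₁mem t htmem ht.1
    have h3 : (3:ℝ)/2 ≤ U/2 := by linarith
    nlinarith [mul_nonneg (by linarith [ht.1] : (0:ℝ) ≤ t - p₁) (by positivity : (0:ℝ) ≤ 1/(4*δ)), hp₁]

lemma key_lb {x x3 c d m : ℝ} {f : ℝ → ℝ} (hcd : Ioo c d ⊆ Ioo x x3) (hm : 0 ≤ m)
    (hpt : ∀ t ∈ Ioo c d, m ≤ f t) :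
    ENNReal.ofReal m * volume (Ioo c d) ≤ ∫⁻ t in Ioo x x3, ENNReal.ofReal (f t) := by
  calc ENNReal.ofReal m * volume (Ioo c d)
      = ∫⁻ _ in Ioo c d, ENNReal.ofReal m := (setLIntegral_const _ _).symm
    _ ≤ ∫⁻ t in Ioo c d, ENNReal.ofReal (f t) := by
        refine lintegral_mono_ae ?_
        filter_upwards [ae_restrict_of_forall_mem measurableSet_Ioo hpt] with t ht
        exact ENNReal.ofReal_le_ofReal ht
    _ ≤ ∫⁻ t in Ioo x x3, ENNReal.ofReal (f t) :=
        lintegral_mono' (Measure.restrict_mono hcd le_rfl) le_rfl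



/-- **Transition cost**: if `u` vanishes somewhere in `[x, x+ε]`, the second-order
energy on `(x, x+3ε)` is at least `3/128`. -/
lemma trans_lemma {a b ε x z : ℝ} {u u' u'' : ℝ → ℝ} (hε : 0 < ε)
    (h1 : ∀ t ∈ Ioo a b, HasDerivAt u (u' t) t)
    (h2 : ∀ s ∈ Ioo a b, ∀ t ∈ Ioo a b, uIcc s t ⊆ Ioo a b → u' t - u' s = ∫ r in s..t, u'' r)
    (hint : IntegrableOn u'' (Ioo a b) volume)
    (hint2 : IntegrableOn (fun t => (u'' t)^2) (Ioo a b) volume)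
    (hz : z ∈ Icc x (x+ε)) (hu0 : u z = 0)
    (hsub : Icc x (x + 3*ε) ⊆ Ioo a b) :
    ENNReal.ofReal (3/128) ≤
      ∫⁻ t in Ioo x (x + 3*ε), ENNReal.ofReal (ε⁻¹ * ((u t)^2 - 1)^2 + ε^3 * (u'' t)^2) := by
  have hIccz : Icc z (z + ε/24) ⊆ Icc x (x + 3*ε) :=
    Icc_subset_Icc hz.1 (by linarith [hz.2])
  have hucont : ContinuousOn u (Ioo a b) :=
    fun t ht => (h1 t ht).continuousAt.continuousWithinAt
  by_cases hA : ∀ t ∈ Icc z (z + ε/24), |u t| < 1/2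
  · -- branch A : u stays in the band on an interval of length ε/24
    have hlb := key_lb (x := x) (x3 := x + 3*ε) (c := z) (d := z + ε/24)
      (f := fun t => ε⁻¹ * ((u t)^2 - 1)^2 + ε^3 * (u'' t)^2)
      (by
        intro t ht
        exact Ioo_subset_Ioo (hz.1) (by linarith [hz.2]) ht)
      (by positivity : (0:ℝ) ≤ ε⁻¹ * (9/16))
      (by
        intro t ht
        have h12 : |u t| < 1/2 := hA t (Ioo_subset_Icc_self ht)
        have hu2 : (u t)^2 < 1/4 := by nlinarith [sq_abs (u t), abs_nonneg (u t)]
        have h916 : (9:ℝ)/16 ≤ ((u t)^2 - 1)^2 := by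
          nlinarith [sq_nonneg (u t), mul_pos (by linarith : (0:ℝ) < 1/4 - (u t)^2)
            (by nlinarith [sq_nonneg (u t)] : (0:ℝ) < 7/4 - (u t)^2)]
        have := mul_le_mul_of_nonneg_left h916 (by positivity : (0:ℝ) ≤ ε⁻¹)
        nlinarith [sq_nonneg (u'' t), pow_pos hε 3])
    refine le_trans ?_ hlb
    rw [Real.volume_Ioo, ← ENNReal.ofReal_mul (by positivity)]
    refine ENNReal.ofReal_le_ofReal ?_
    rw [show z + ε/24 - z = ε/24 by ring]
    rw [show ε⁻¹ * (9/16) * (ε/24) = (9/(16*24)) * (ε * ε⁻¹) by ring,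
      mul_inv_cancel₀ (ne_of_gt hε)]
    norm_num
  · -- branch B : u exits the band
    push_neg at hA
    obtain ⟨t₀, ht₀, ht₀'⟩ := hA
    set S := Icc z (z + ε/24) ∩ (fun t => |u t|) ⁻¹' (Ici (1/2)) with hS
    have hucontz : ContinuousOn (fun t => |u t|) (Icc z (z + ε/24)) :=
      (hucont.mono (hIccz.trans hsub)).abs
    have hSclosed : IsClosed S :=
      hucontz.preimage_isClosed_of_isClosed isClosed_Icc isClosed_Ici
    have hSne : S.Nonempty := ⟨t₀, ht₀, ht₀'⟩
    have hSbdd : BddBelow S := ⟨z, fun t ht => ht.1.1⟩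
    set z₂ := sInf S with hz₂
    have hz₂S : z₂ ∈ S := hSclosed.csInf_mem hSne hSbdd
    have hz₂icc : z₂ ∈ Icc z (z + ε/24) := hz₂S.1
    have habs2 : 1/2 ≤ |u z₂| := hz₂S.2
    have hzz₂ : z < z₂ := by
      rcases lt_or_eq_of_le hz₂icc.1 with h | h
      · exact h
      · exfalso; rw [← h, hu0] at habs2; simp at habs2; linarith
    have hband : ∀ t ∈ Ico z z₂, |u t| < 1/2 := by
      intro t ht
      by_contra hcon
      push_neg at hcon
      have : t ∈ S := ⟨⟨ht.1, le_trans ht.2.le hz₂icc.2⟩, hcon⟩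
      exact absurd (csInf_le hSbdd this) (not_le.mpr ht.2)
    -- |u z₂| = 1/2 by left continuity
    have habs2' : |u z₂| ≤ 1/2 := by
      have hten : Tendsto (fun t => |u t|) (nhdsWithin z₂ (Iio z₂)) (nhds (|u z₂|)) := by
        have : ContinuousAt (fun t => |u t|) z₂ :=
          ((h1 z₂ (hsub (hIccz hz₂icc))).continuousAt).abs
        exact this.continuousWithinAt.tendsto
      refine le_of_tendsto hten ?_
      have hev : ∀ᶠ t in nhdsWithin z₂ (Iio z₂), t ∈ Ico z z₂ := by
        have h1' : ∀ᶠ t in nhdsWithin z₂ (Iio z₂), t ∈ Iio z₂ := eventually_mem_nhdsWithin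
        have h2' : ∀ᶠ t in nhdsWithin z₂ (Iio z₂), t ∈ Ioi z :=
          mem_nhdsWithin_of_mem_nhds (Ioi_mem_nhds hzz₂)
        filter_upwards [h1', h2'] with t ht1 ht2
        exact ⟨ht2.le, ht1⟩
      filter_upwards [hev] with t ht
      exact (hband t ht).le
    have habseq : |u z₂| = 1/2 := le_antisymm habs2' habs2
    -- MVT on [z, z₂]
    set δ := z₂ - z with hδdef
    have hδpos : 0 < δ := by simp only [hδdef]; linarith
    have hδε : δ ≤ ε/24 := by have := hz₂icc.2; simp only [hδdef]; linarith
    have hIcczz₂ : Icc z z₂ ⊆ Ioo a b :=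
      (Icc_subset_Icc le_rfl hz₂icc.2).trans (hIccz.trans hsub)
    obtain ⟨w, hwmem, hw'⟩ := exists_hasDerivAt_eq_slope u u' hzz₂
      (hucont.mono hIcczz₂) (fun t ht => h1 t (hIcczz₂ (Ioo_subset_Icc_self ht)))
    rw [hu0, sub_zero] at hw'
    have hw'abs : |u' w| = 1/(2*δ) := by
      rw [hw', abs_div, habseq, abs_of_pos hδpos, div_div]
    have hwin : Icc w (w+ε) ⊆ Icc x (x + 3*ε) :=
      Icc_subset_Icc (by linarith [hwmem.1, hz.1])
        (by linarith [hwmem.2, hz₂icc.2, hz.2])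
    have hwinΩ : Icc w (w+ε) ⊆ Ioo a b := hwin.trans hsub
    have hIocsub : Ioc w (w+ε) ⊆ Ioo a b := Ioc_subset_Icc_self.trans hwinΩ
    set A := ∫ t in Ioc w (w+ε), (u'' t)^2 with hAdef
    have hA0 : 0 ≤ A := integral_nonneg (fun t => sq_nonneg _)
    by_cases hbig : 1/(16*δ^2*ε) ≤ A
    · -- large second derivative
      have hIoc3 : Ioc w (w+ε) ⊆ Ioo x (x + 3*ε) := by
        intro t ht
        constructor
        · linarith [ht.1, hwmem.1, hz.1]
        · have h1t := ht.2
          have h2t := hwmem.2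
          have h3t := hz₂icc.2
          have h4t := hz.2
          linarith
      have hval : (36:ℝ) ≤ ε^3 * A := by
        have h24 : 24*δ ≤ ε := by linarith
        have hc : ε^3 * (1/(16*δ^2*ε)) = ε^2/(16*δ^2) := by field_simp
        have hd2 : (36:ℝ) ≤ ε^2/(16*δ^2) := by
          rw [le_div_iff₀ (by positivity)]
          nlinarith
        calc (36:ℝ) ≤ ε^2/(16*δ^2) := hd2
          _ = ε^3 * (1/(16*δ^2*ε)) := hc.symm
          _ ≤ ε^3 * A := mul_le_mul_of_nonneg_left hbig (by positivity)
      have hintA : IntegrableOn (fun t => ε^3 * (u'' t)^2) (Ioc w (w+ε)) volume :=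
        (hint2.mono_set hIocsub).const_mul _
      calc ENNReal.ofReal (3/128) ≤ ENNReal.ofReal (ε^3 * A) :=
            ENNReal.ofReal_le_ofReal (by linarith)
        _ = ENNReal.ofReal (∫ t in Ioc w (w+ε), ε^3 * (u'' t)^2) := by
            rw [MeasureTheory.integral_const_mul]
        _ = ∫⁻ t in Ioc w (w+ε), ENNReal.ofReal (ε^3 * (u'' t)^2) :=
            MeasureTheory.ofReal_integral_eq_lintegral_ofReal hintA
              (ae_of_all _ (fun t => by positivity))
        _ ≤ ∫⁻ t in Ioc w (w+ε), ENNReal.ofReal (ε⁻¹ * ((u t)^2 - 1)^2 + ε^3 * (u'' t)^2) := by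
            refine lintegral_mono_ae (ae_of_all _ (fun t => ?_))
            refine ENNReal.ofReal_le_ofReal ?_
            nlinarith [sq_nonneg ((u t)^2 - 1), inv_pos.mpr hε]
        _ ≤ ∫⁻ t in Ioo x (x + 3*ε), ENNReal.ofReal (ε⁻¹ * ((u t)^2 - 1)^2 + ε^3 * (u'' t)^2) :=
            lintegral_mono' (Measure.restrict_mono hIoc3 le_rfl) le_rfl
    · -- small second derivative : steep monotone excursion
      push_neg at hbig
      set Ireal := ∫ t in Ioc w (w+ε), |u'' t| with hIdef
      have hIr2 : Ireal^2 ≤ ε * A := by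
        refine sq_setIntegral_abs_le hε.le ?_ (hint.mono_set hIocsub) (hint2.mono_set hIocsub)
        rw [Real.volume_Ioc]
        simp
      have hIrnn : 0 ≤ Ireal := integral_nonneg (fun t => abs_nonneg _)
      have hIrlt : Ireal < 1/(4*δ) := by
        have h1' : ε * A < ε * (1/(16*δ^2*ε)) := mul_lt_mul_of_pos_left hbig hε
        have h2' : ε * (1/(16*δ^2*ε)) = (1/(4*δ))^2 := by field_simp; ring
        refine lt_of_pow_lt_pow_left₀ 2 (by positivity) ?_
        calc Ireal^2 ≤ ε * A := hIr2
          _ < (1/(4*δ))^2 := by rw [← h2']; exact h1'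
      have hwIcc : w ∈ Icc w (w+ε) := ⟨le_rfl, by linarith⟩
      have hdiff : ∀ t ∈ Icc w (w+ε), |u' t - u' w| ≤ Ireal := by
        intro t ht
        have hwΩ : w ∈ Ioo a b := hwinΩ hwIcc
        have htΩ : t ∈ Ioo a b := hwinΩ ht
        rw [h2 w hwΩ t htΩ ((Set.ordConnected_Ioo).uIcc_subset hwΩ htΩ)]
        have habs := intervalIntegral.norm_integral_le_integral_norm (f := u'')
          (μ := volume) ht.1
        calc |∫ r in w..t, u'' r| ≤ ∫ r in w..t, |u'' r| := by
              simpa [Real.norm_eq_abs] using habs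
          _ = ∫ r in Ioc w t, |u'' r| := intervalIntegral.integral_of_le ht.1
          _ ≤ Ireal := by
              refine setIntegral_mono_set ((hint.mono_set hIocsub).abs)
                (ae_of_all _ (fun t => abs_nonneg _)) ?_
              exact (Ioc_subset_Ioc_right ht.2).eventuallyLE
      have harith : 1/(2*δ) - 1/(4*δ) = 1/(4*δ) := by field_simp; ring
      have harith2 : 1/(2*δ) + 1/(4*δ) = 3/(4*δ) := by field_simp; ring
      have hlo : ∀ t ∈ Icc w (w+ε), 1/(4*δ) ≤ |u' t| := by
        intro t ht
        have h := hdiff t ht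
        have htri := abs_sub_abs_le_abs_sub (u' w) (u' t)
        rw [abs_sub_comm (u' w) (u' t)] at htri
        linarith [hw'abs ▸ htri]
      have hhi : ∀ t ∈ Icc w (w+ε), |u' t| ≤ 3/(4*δ) := by
        intro t ht
        have h := hdiff t ht
        have htri := abs_sub_abs_le_abs_sub (u' t) (u' w)
        linarith [hw'abs ▸ htri]
      have hu'cont : ContinuousOn u' (Icc w (w+ε)) :=
        contOn_of_ftc h2 hint hwinΩ (by linarith)
      have hw'ne : u' w ≠ 0 := by
        intro h
        rw [h, abs_zero] at hw'abs
        have : (0:ℝ) < 1/(2*δ) := by positivity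
        linarith
      have hsame : ∀ t ∈ Icc w (w+ε), 0 < u' t * u' w := by
        intro t ht
        by_contra hc
        push_neg at hc
        have htne : u' t ≠ 0 := by
          intro h
          have := hlo t ht
          rw [h, abs_zero] at this
          have : (0:ℝ) < 1/(4*δ) := by positivity
          linarith
        have hmem0 : (0:ℝ) ∈ uIcc (u' t) (u' w) := by
          rcases mul_nonpos_iff.mp hc with ⟨h1', h2'⟩ | ⟨h1', h2'⟩
          · exact mem_uIcc.mpr (Or.inr ⟨h2', h1'⟩)
          · exact mem_uIcc.mpr (Or.inl ⟨h1', h2'⟩)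
        have huIcc_sub : uIcc t w ⊆ Icc w (w+ε) :=
          (Set.ordConnected_Icc).uIcc_subset ht hwIcc
        obtain ⟨s, hs, hs0⟩ := intermediate_value_uIcc (hu'cont.mono huIcc_sub) hmem0
        have := hlo s (huIcc_sub hs)
        rw [hs0, abs_zero] at this
        have : (0:ℝ) < 1/(4*δ) := by positivity
        linarith [hlo s (huIcc_sub hs), hs0 ▸ abs_zero]
      have hσex : ∃ σ : ℝ, (σ = 1 ∨ σ = -1) ∧
          ∀ t ∈ Icc w (w+ε), 1/(4*δ) ≤ σ * u' t ∧ σ * u' t ≤ 3/(4*δ) := by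
        rcases lt_or_gt_of_ne hw'ne with hneg | hpos
        · refine ⟨-1, Or.inr rfl, fun t ht => ?_⟩
          have hmul := hsame t ht
          have htneg : u' t < 0 := by nlinarith
          have habs' : |u' t| = -(u' t) := abs_of_neg htneg
          constructor
          · have := hlo t ht; rw [habs'] at this; linarith
          · have := hhi t ht; rw [habs'] at this; linarith
        · refine ⟨1, Or.inl rfl, fun t ht => ?_⟩
          have hmul := hsame t ht
          have htpos : 0 < u' t := by nlinarith
          have habs' : |u' t| = u' t := abs_of_pos htpos
          constructor
          · have := hlo t ht; rw [habs'] at this; linarith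
          · have := hhi t ht; rw [habs'] at this; linarith
      obtain ⟨σ, hσcases, hσb⟩ := hσex
      have hσsq : ∀ r : ℝ, (σ * r)^2 = r^2 := by
        intro r; rcases hσcases with h|h <;> rw [h] <;> ring
      have hσabs : |σ * u w| = |u w| := by
        rcases hσcases with h|h <;> rw [h] <;> simp
      obtain ⟨p₁, p₂, hp₁, hp₂, hlen, hge⟩ := lemma_up
        (v := fun t => σ * u t) (v' := fun t => σ * u' t) hδpos hδε hε
        (fun t ht => (h1 t (hwinΩ ht)).const_mul σ)
        (continuousOn_const.mul hu'cont)
        (by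
          rw [hσabs]
          exact (hband w ⟨hwmem.1.le, hwmem.2⟩).le)
        (fun t ht => (hσb t ht).1) (fun t ht => (hσb t ht).2)
      have hlb := key_lb (x := x) (x3 := x + 3*ε) (c := p₁) (d := p₂)
        (f := fun t => ε⁻¹ * ((u t)^2 - 1)^2 + ε^3 * (u'' t)^2)
        (by
          intro t ht
          constructor
          · linarith [ht.1, hp₁.1, hwmem.1, hz.1]
          · have := hp₂.2
            have := hwmem.2
            have := hz₂icc.2
            have := hz.2
            linarith [ht.2])
        (by positivity : (0:ℝ) ≤ ε⁻¹ * (25/16))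
        (by
          intro t ht
          have h32 := hge t (Ioo_subset_Icc_self ht)
          have hsq : (9:ℝ)/4 ≤ (u t)^2 := by
            have := hσsq (u t)
            nlinarith
          have h2516 : (25:ℝ)/16 ≤ ((u t)^2 - 1)^2 := by nlinarith
          have hmul := mul_le_mul_of_nonneg_left h2516
            (by positivity : (0:ℝ) ≤ ε⁻¹)
          nlinarith [sq_nonneg (u'' t), pow_pos hε 3])
      refine le_trans ?_ hlb
      rw [Real.volume_Ioo, ← ENNReal.ofReal_mul (by positivity)]
      refine ENNReal.ofReal_le_ofReal ?_
      have hmul : ε⁻¹ * (25/16) * (ε/12) ≤ ε⁻¹ * (25/16) * (p₂ - p₁) :=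
        mul_le_mul_of_nonneg_left hlen (by positivity)
      have heq : ε⁻¹ * (25/16) * (ε/12) = 25/192 := by
        field_simp
        ring
      linarith

lemma exists_meas_version {f : ℝ → ℝ≥0∞} {s : Set ℝ} (hs : MeasurableSet s)
    (hf : AEMeasurable f (volume.restrict s)) :
    ∃ g : ℝ → ℝ≥0∞, Measurable g ∧ g =ᵐ[volume.restrict s] f ∧ (∀ t, t ∉ s → g t = 0) ∧
      ∫⁻ t, g t = ∫⁻ t in s, f t := by
  refine ⟨s.indicator hf.mk, (hf.measurable_mk).indicator hs, ?_, fun t ht => indicator_of_notMem ht _, ?_⟩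
  · have h1 : ∀ᵐ t ∂(volume.restrict s), t ∈ s := ae_restrict_mem hs
    filter_upwards [hf.ae_eq_mk, h1] with t h2 h3
    rw [indicator_of_mem h3, ← h2]
  · rw [lintegral_indicator hs]
    exact lintegral_congr_ae hf.ae_eq_mk.symm

-- check pow_const
example (f : ℝ → ℝ) (μ : Measure ℝ) (h : AEMeasurable f μ) : AEMeasurable (fun x => f x ^ 2) μ := by
  exact h.pow_const 2

-- preimage of null set under translation
lemma null_preimage_add {A : Set ℝ} (hA : volume A = 0) (c : ℝ) :
    volume ((fun x => x + c) ⁻¹' A) = 0 :=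
  (measurePreserving_add_right volume c).quasiMeasurePreserving.preimage_null hA

-- indicator kernel rewrite
example (x t ε : ℝ) (g : ℝ → ℝ≥0∞) :
    (Ioc x (x+ε)).indicator g t = (Ico (t-ε) t).indicator (fun _ => g t) x := by
  by_cases h : t ∈ Ioc x (x+ε)
  · rw [indicator_of_mem h, indicator_of_mem (by constructor <;> [linarith [h.2]; exact h.1])]
  · rw [indicator_of_notMem h, indicator_of_notMem (by
      intro hc
      exact h ⟨hc.2, by linarith [hc.1]⟩)]

lemma swap_Ioc {s : Set ℝ} (hs : MeasurableSet s) {g : ℝ → ℝ≥0∞} (hg : Measurable g)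
    {c : ℝ} (hc : 0 < c) :
    ∫⁻ x in s, ∫⁻ t in Ioc x (x+c), g t ≤ ENNReal.ofReal c * ∫⁻ t, g t := by
  have hker : ∀ x : ℝ, ∫⁻ t in Ioc x (x+c), g t = ∫⁻ t, (Ioc x (x+c)).indicator g t :=
    fun x => (lintegral_indicator measurableSet_Ioc g).symm
  have hmeasK : Measurable (Function.uncurry fun x t => (Ioc x (x+c)).indicator g t) := by
    have heq : (Function.uncurry fun x t => (Ioc x (x+c)).indicator g t) =
        ({p : ℝ × ℝ | p.1 < p.2 ∧ p.2 ≤ p.1 + c}).indicator (fun p => g p.2) := by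
      funext p
      by_cases h : p.2 ∈ Ioc p.1 (p.1 + c)
      · rw [Function.uncurry, indicator_of_mem h,
          indicator_of_mem (show _ ∈ {p : ℝ × ℝ | p.1 < p.2 ∧ p.2 ≤ p.1 + c} from ⟨h.1, h.2⟩)]
      · rw [Function.uncurry, indicator_of_notMem h, indicator_of_notMem
          (by intro hc'; exact h ⟨hc'.1, hc'.2⟩)]
    rw [heq]
    exact (hg.comp measurable_snd).indicator
      ((measurableSet_lt measurable_fst measurable_snd).inter
        (measurableSet_le measurable_snd (measurable_fst.add_const c)))
  calc ∫⁻ x in s, ∫⁻ t in Ioc x (x+c), g t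
      = ∫⁻ x in s, ∫⁻ t, (Ioc x (x+c)).indicator g t := by simp_rw [hker]
    _ = ∫⁻ t, ∫⁻ x in s, (Ioc x (x+c)).indicator g t := lintegral_lintegral_swap hmeasK.aemeasurable
    _ ≤ ∫⁻ t, ENNReal.ofReal c * g t := by
        refine lintegral_mono (fun t => ?_)
        have hkr : (fun x => (Ioc x (x+c)).indicator g t) =
            (Ico (t-c) t).indicator (fun _ => g t) := by
          funext x
          by_cases h : t ∈ Ioc x (x+c)
          · rw [indicator_of_mem h, indicator_of_mem (by constructor <;> [linarith [h.2]; exact h.1])]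
          · rw [indicator_of_notMem h, indicator_of_notMem (by
              intro hcon; exact h ⟨hcon.2, by linarith [hcon.1]⟩)]
        rw [hkr, lintegral_indicator measurableSet_Ico, setLIntegral_const]
        calc g t * (volume.restrict s) (Ico (t-c) t)
            ≤ g t * ENNReal.ofReal c := by
              refine mul_le_mul_right ?_ _
              calc (volume.restrict s) (Ico (t-c) t) ≤ volume (Ico (t-c) t) :=
                    Measure.restrict_le_self _
                _ = ENNReal.ofReal c := by rw [Real.volume_Ico]; norm_num
          _ = ENNReal.ofReal c * g t := mul_comm _ _
    _ = ENNReal.ofReal c * ∫⁻ t, g t := lintegral_const_mul' _ _ ENNReal.ofReal_ne_top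

lemma swap_Ioo {s : Set ℝ} (hs : MeasurableSet s) {g : ℝ → ℝ≥0∞} (hg : Measurable g)
    {c : ℝ} (hc : 0 < c) :
    ∫⁻ x in s, ∫⁻ t in Ioo x (x+c), g t ≤ ENNReal.ofReal c * ∫⁻ t, g t := by
  have hker : ∀ x : ℝ, ∫⁻ t in Ioo x (x+c), g t = ∫⁻ t, (Ioo x (x+c)).indicator g t :=
    fun x => (lintegral_indicator measurableSet_Ioo g).symm
  have hmeasK : Measurable (Function.uncurry fun x t => (Ioo x (x+c)).indicator g t) := by
    have heq : (Function.uncurry fun x t => (Ioo x (x+c)).indicator g t) =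
        ({p : ℝ × ℝ | p.1 < p.2 ∧ p.2 < p.1 + c}).indicator (fun p => g p.2) := by
      funext p
      by_cases h : p.2 ∈ Ioo p.1 (p.1 + c)
      · rw [Function.uncurry, indicator_of_mem h,
          indicator_of_mem (show _ ∈ {p : ℝ × ℝ | p.1 < p.2 ∧ p.2 < p.1 + c} from ⟨h.1, h.2⟩)]
      · rw [Function.uncurry, indicator_of_notMem h, indicator_of_notMem
          (by intro hc'; exact h ⟨hc'.1, hc'.2⟩)]
    rw [heq]
    exact (hg.comp measurable_snd).indicator
      ((measurableSet_lt measurable_fst measurable_snd).inter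
        (measurableSet_lt measurable_snd (measurable_fst.add_const c)))
  calc ∫⁻ x in s, ∫⁻ t in Ioo x (x+c), g t
      = ∫⁻ x in s, ∫⁻ t, (Ioo x (x+c)).indicator g t := by simp_rw [hker]
    _ = ∫⁻ t, ∫⁻ x in s, (Ioo x (x+c)).indicator g t := lintegral_lintegral_swap hmeasK.aemeasurable
    _ ≤ ∫⁻ t, ENNReal.ofReal c * g t := by
        refine lintegral_mono (fun t => ?_)
        have hkr : (fun x => (Ioo x (x+c)).indicator g t) =
            (Ioo (t-c) t).indicator (fun _ => g t) := by
          funext x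
          by_cases h : t ∈ Ioo x (x+c)
          · rw [indicator_of_mem h, indicator_of_mem (by constructor <;> [linarith [h.2]; exact h.1])]
          · rw [indicator_of_notMem h, indicator_of_notMem (by
              intro hcon; exact h ⟨hcon.2, by linarith [hcon.1]⟩)]
        rw [hkr, lintegral_indicator measurableSet_Ioo, setLIntegral_const]
        calc g t * (volume.restrict s) (Ioo (t-c) t)
            ≤ g t * ENNReal.ofReal c := by
              refine mul_le_mul_right ?_ _
              calc (volume.restrict s) (Ioo (t-c) t) ≤ volume (Ioo (t-c) t) :=
                    Measure.restrict_le_self _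
                _ = ENNReal.ofReal c := by rw [Real.volume_Ioo]; norm_num
          _ = ENNReal.ofReal c * g t := mul_comm _ _
    _ = ENNReal.ofReal c * ∫⁻ t, g t := lintegral_const_mul' _ _ ENNReal.ofReal_ne_top

lemma counting_bound {G : Set ℝ} (hG : MeasurableSet G) {e₀ : ℝ → ℝ≥0∞} (he : Measurable e₀)
    {c m : ℝ} (hc : 0 < c)
    (hpt : ∀ x ∈ G, ENNReal.ofReal m ≤ ∫⁻ t in Ioo x (x+c), e₀ t) :
    ENNReal.ofReal m * volume G ≤ ENNReal.ofReal c * ∫⁻ t, e₀ t := by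
  calc ENNReal.ofReal m * volume G = ∫⁻ _ in G, ENNReal.ofReal m := (setLIntegral_const _ _).symm
    _ ≤ ∫⁻ x in G, ∫⁻ t in Ioo x (x+c), e₀ t :=
        lintegral_mono_ae (ae_restrict_of_forall_mem hG hpt)
    _ ≤ ENNReal.ofReal c * ∫⁻ t, e₀ t := swap_Ioo hG he hc



/-- Main per-`ε` interpolation estimate. -/
lemma main_n {a b a₀ b₀ ε : ℝ} {u u' u'' : ℝ → ℝ}
    (hab : a < b) (haa : a < a₀) (h00 : a₀ < b₀) (hbb : b₀ < b)
    (hε : 0 < ε) (hε3 : b₀ + 3*ε ≤ b)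
    (h1 : ∀ t ∈ Ioo a b, HasDerivAt u (u' t) t)
    (h2 : ∀ s ∈ Ioo a b, ∀ t ∈ Ioo a b, uIcc s t ⊆ Ioo a b → u' t - u' s = ∫ r in s..t, u'' r)
    (hint : IntegrableOn u'' (Ioo a b) volume)
    (hmeas2 : AEMeasurable u'' (volume.restrict (Ioo a b))) :
    (∫⁻ x in Ioo a₀ b₀, ENNReal.ofReal (ε * (u' x)^2)) ≤
      ENNReal.ofReal 4000 *
        ∫⁻ x in Ioo a b, ENNReal.ofReal (ε⁻¹ * ((u x)^2 - 1)^2 + ε^3 * (u'' x)^2) := by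
  classical
  set Ω := Ioo a b with hΩdef
  set Ω₀ := Ioo a₀ b₀ with hΩ₀def
  set E := ∫⁻ x in Ω, ENNReal.ofReal (ε⁻¹ * ((u x)^2 - 1)^2 + ε^3 * (u'' x)^2) with hEdef
  rcases eq_or_ne E ⊤ with hE | hE
  · rw [hE, ENNReal.mul_top (by simp : ENNReal.ofReal 4000 ≠ 0)]
    exact le_top
  -- basic facts
  have hΩmeas : MeasurableSet Ω := measurableSet_Ioo
  have hΩ₀meas : MeasurableSet Ω₀ := measurableSet_Ioo
  have hucont : ContinuousOn u Ω := fun t ht => (h1 t ht).continuousAt.continuousWithinAt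
  have huae : AEMeasurable u (volume.restrict Ω) := hucont.aemeasurable hΩmeas
  -- the two half energies
  set A : ℝ → ℝ := fun t => ((u t)^2 - 1)^2 with hAdef
  set B : ℝ → ℝ := fun t => (u'' t)^2 with hBdef
  have hAnn : ∀ t, 0 ≤ A t := fun t => sq_nonneg _
  have hBnn : ∀ t, 0 ≤ B t := fun t => sq_nonneg _
  have hsplit : ∀ t, ENNReal.ofReal (ε⁻¹ * A t + ε^3 * B t) =
      ENNReal.ofReal ε⁻¹ * ENNReal.ofReal (A t) + ENNReal.ofReal (ε^3) * ENNReal.ofReal (B t) := by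
    intro t
    rw [ENNReal.ofReal_add (by positivity) (by positivity), ENNReal.ofReal_mul (by positivity),
      ENNReal.ofReal_mul (by positivity)]
  set EA := ∫⁻ t in Ω, ENNReal.ofReal (A t) with hEAdef
  set EB := ∫⁻ t in Ω, ENNReal.ofReal (B t) with hEBdef
  have hEA_le : ENNReal.ofReal ε⁻¹ * EA ≤ E := by
    rw [hEAdef, ← lintegral_const_mul' _ _ ENNReal.ofReal_ne_top]
    refine lintegral_mono (fun t => ?_)
    rw [hsplit t]
    exact le_add_right le_rfl
  have hEB_le : ENNReal.ofReal (ε^3) * EB ≤ E := by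
    rw [hEBdef, ← lintegral_const_mul' _ _ ENNReal.ofReal_ne_top]
    refine lintegral_mono (fun t => ?_)
    rw [hsplit t]
    exact le_add_left le_rfl
  have hEA_bound : EA ≤ ENNReal.ofReal ε * E := by
    calc EA = ENNReal.ofReal ε * (ENNReal.ofReal ε⁻¹ * EA) := by
          rw [← mul_assoc, ← ENNReal.ofReal_mul hε.le, mul_inv_cancel₀ (ne_of_gt hε)]
          simp
      _ ≤ ENNReal.ofReal ε * E := mul_le_mul_right hEA_le _
  have hEB_bound : EB ≤ ENNReal.ofReal (ε⁻¹^3) * E := by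
    calc EB = ENNReal.ofReal (ε⁻¹^3) * (ENNReal.ofReal (ε^3) * EB) := by
          rw [← mul_assoc, ← ENNReal.ofReal_mul (by positivity)]
          rw [show ε⁻¹^3 * ε^3 = 1 by field_simp]
          simp
      _ ≤ ENNReal.ofReal (ε⁻¹^3) * E := mul_le_mul_right hEB_le _
  have hEAfin : EA ≠ ⊤ :=
    ne_top_of_le_ne_top (by exact ENNReal.mul_ne_top ENNReal.ofReal_ne_top hE) hEA_bound
  have hEBfin : EB ≠ ⊤ :=
    ne_top_of_le_ne_top (by exact ENNReal.mul_ne_top ENNReal.ofReal_ne_top hE) hEB_bound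
  -- integrability of u''^2
  have hBmeas : AEMeasurable B (volume.restrict Ω) := hmeas2.pow_const 2
  have hint2 : IntegrableOn (fun t => (u'' t)^2) Ω volume := by
    refine ⟨hBmeas.aestronglyMeasurable, ?_⟩
    rw [hasFiniteIntegral_iff_ofReal (ae_of_all _ hBnn)]
    exact lt_of_le_of_lt (le_of_eq rfl) (lt_of_le_of_lt le_rfl hEBfin.lt_top)
  -- measurable versions
  have hAae : AEMeasurable (fun t => ENNReal.ofReal (A t)) (volume.restrict Ω) :=
    (ENNReal.measurable_ofReal.comp_aemeasurable (((huae.pow_const 2).sub aemeasurable_const).pow_const 2))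
  have hBae : AEMeasurable (fun t => ENNReal.ofReal (B t)) (volume.restrict Ω) :=
    ENNReal.measurable_ofReal.comp_aemeasurable hBmeas
  have heae : AEMeasurable (fun t => ENNReal.ofReal (ε⁻¹ * A t + ε^3 * B t)) (volume.restrict Ω) := by
    refine ENNReal.measurable_ofReal.comp_aemeasurable ?_
    exact ((((huae.pow_const 2).sub aemeasurable_const).pow_const 2).const_mul ε⁻¹).add
      (hBmeas.const_mul (ε^3))
  obtain ⟨gA, hgAmeas, hgAeq, hgA0, hgAint⟩ := exists_meas_version hΩmeas hAae
  obtain ⟨gB, hgBmeas, hgBeq, hgB0, hgBint⟩ := exists_meas_version hΩmeas hBae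
  obtain ⟨e₀, he₀meas, he₀eq, he₀0, he₀int⟩ := exists_meas_version hΩmeas heae
  have he₀E : ∫⁻ t, e₀ t = E := he₀int
  have hgBE : ∫⁻ t, gB t = EB := hgBint
  have hΩ₀Ω : Ω₀ ⊆ Ω := fun t ht => ⟨lt_trans haa ht.1, lt_trans ht.2 hbb⟩
  have hwin1 : ∀ x ∈ Ω₀, Icc x (x+ε) ⊆ Ω := by
    intro x hx t ht
    exact ⟨by linarith [hx.1, ht.1], by linarith [hx.2, ht.2]⟩
  have hwin3 : ∀ x ∈ Ω₀, Icc x (x+3*ε) ⊆ Ω := by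
    intro x hx t ht
    exact ⟨by linarith [hx.1, ht.1], by linarith [hx.2, ht.2]⟩
  -- Step A : pointwise interpolation bound via MVT and Cauchy-Schwarz
  have hstepA : ∀ x ∈ Ω₀, ENNReal.ofReal (ε * (u' x)^2) ≤
      ENNReal.ofReal (2/ε * (u (x+ε) - u x)^2) +
        ENNReal.ofReal (2*ε^2) * ∫⁻ t in Ioc x (x+ε), ENNReal.ofReal (B t) := by
    intro x hx
    have hxw := hwin1 x hx
    have hxΩ : x ∈ Ω := hxw ⟨le_rfl, by linarith⟩
    have hIocw : Ioc x (x+ε) ⊆ Ω := Ioc_subset_Icc_self.trans hxw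
    obtain ⟨t, htmem, hts⟩ := exists_hasDerivAt_eq_slope u u' (by linarith : x < x+ε)
      (hucont.mono hxw) (fun r hr => h1 r (hxw (Ioo_subset_Icc_self hr)))
    have hts' : u' t = (u (x+ε) - u x) / ε := by rw [hts]; congr 1; ring
    set Ir := ∫ r in Ioc x (x+ε), |u'' r| with hIrdef
    have hIrnn : 0 ≤ Ir := integral_nonneg fun r => abs_nonneg _
    have hdiff : |u' x - u' t| ≤ Ir := by
      have htΩ : t ∈ Ω := hxw (Ioo_subset_Icc_self htmem)
      rw [abs_sub_comm, h2 x hxΩ t htΩ ((Set.ordConnected_Ioo).uIcc_subset hxΩ htΩ)]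
      calc |∫ r in x..t, u'' r| ≤ ∫ r in x..t, |u'' r| := by
            simpa [Real.norm_eq_abs] using
              intervalIntegral.norm_integral_le_integral_norm (μ := volume) (f := u'') htmem.1.le
        _ = ∫ r in Ioc x t, |u'' r| := intervalIntegral.integral_of_le htmem.1.le
        _ ≤ Ir := setIntegral_mono_set ((hint.mono_set hIocw).abs)
            (ae_of_all _ fun r => abs_nonneg _) (Ioc_subset_Ioc_right htmem.2.le).eventuallyLE
    set Ax := ∫ r in Ioc x (x+ε), B r with hAxdef
    have hAxnn : 0 ≤ Ax := integral_nonneg fun r => sq_nonneg _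
    have hCS : Ir^2 ≤ ε * Ax := by
      refine sq_setIntegral_abs_le hε.le ?_ (hint.mono_set hIocw) (hint2.mono_set hIocw)
      rw [Real.volume_Ioc]
      simp
    have hreal : ε * (u' x)^2 ≤ 2/ε * (u (x+ε) - u x)^2 + 2*ε^2 * Ax := by
      set Δ := u (x+ε) - u x with hΔdef
      have h1' : |u' x| ≤ |Δ|/ε + Ir := by
        have htri := abs_sub_abs_le_abs_sub (u' x) (u' t)
        have habs : |u' t| = |Δ|/ε := by rw [hts', abs_div, abs_of_pos hε]
        linarith
      have h1'' : ε * |u' x| ≤ |Δ| + ε * Ir := by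
        have := mul_le_mul_of_nonneg_left h1' hε.le
        have heq : ε * (|Δ|/ε + Ir) = |Δ| + ε * Ir := by field_simp
        linarith
      have hgoal' : ε^2 * (u' x)^2 ≤ 2*Δ^2 + 2*ε^3*Ax := by
        have hsq : (ε * |u' x|)^2 ≤ (|Δ| + ε*Ir)^2 := by
          have h0 : 0 ≤ ε * |u' x| := by positivity
          nlinarith
        have he1 : (ε * |u' x|)^2 = ε^2 * (u' x)^2 := by rw [mul_pow, sq_abs]
        have he2 : (|Δ| + ε*Ir)^2 ≤ 2*Δ^2 + 2*ε^2*Ir^2 := by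
          nlinarith [sq_nonneg (|Δ| - ε*Ir), sq_abs Δ]
        have he3 : ε^2 * Ir^2 ≤ ε^2 * (ε * Ax) :=
          mul_le_mul_of_nonneg_left hCS (by positivity)
        nlinarith
      rw [← mul_le_mul_iff_right₀ hε]
      have hRHS : ε * (2/ε * (u (x+ε) - u x)^2 + 2*ε^2 * Ax) = 2*Δ^2 + 2*ε^3*Ax := by
        field_simp
        ring
      rw [hRHS]
      calc ε * (ε * (u' x)^2) = ε^2 * (u' x)^2 := by ring
        _ ≤ 2*Δ^2 + 2*ε^3*Ax := hgoal'
    have hAx2 : ENNReal.ofReal (2*ε^2*Ax) =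
        ENNReal.ofReal (2*ε^2) * ∫⁻ r in Ioc x (x+ε), ENNReal.ofReal (B r) := by
      rw [ENNReal.ofReal_mul (by positivity)]
      congr 1
      exact MeasureTheory.ofReal_integral_eq_lintegral_ofReal (hint2.mono_set hIocw)
        (ae_of_all _ hBnn)
    calc ENNReal.ofReal (ε * (u' x)^2)
        ≤ ENNReal.ofReal (2/ε * (u (x+ε) - u x)^2 + 2*ε^2*Ax) := ENNReal.ofReal_le_ofReal hreal
      _ = ENNReal.ofReal (2/ε * (u (x+ε) - u x)^2) + ENNReal.ofReal (2*ε^2*Ax) :=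
          ENNReal.ofReal_add (by positivity) (by positivity)
      _ = ENNReal.ofReal (2/ε * (u (x+ε) - u x)^2) +
          ENNReal.ofReal (2*ε^2) * ∫⁻ r in Ioc x (x+ε), ENNReal.ofReal (B r) := by rw [hAx2]
  -- Step B : integrate the pointwise bound
  have hRcongr : ∀ x ∈ Ω₀, (∫⁻ t in Ioc x (x+ε), ENNReal.ofReal (B t)) =
      ∫⁻ t in Ioc x (x+ε), gB t := by
    intro x hx
    refine lintegral_congr_ae ?_
    exact (hgBeq.symm.filter_mono
      (ae_mono (Measure.restrict_mono (Ioc_subset_Icc_self.trans (hwin1 x hx)) le_rfl)))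
  have hucont0 : ContinuousOn u Ω₀ := hucont.mono hΩ₀Ω
  have hushift_cont : ContinuousOn (fun x => u (x+ε)) Ω₀ := by
    have hmaps : MapsTo (fun x : ℝ => x + ε) Ω₀ Ω := by
      intro x hx
      exact ⟨show a < x + ε by linarith [hx.1], show x + ε < b by linarith [hx.2]⟩
    exact hucont.comp (continuous_id.add continuous_const).continuousOn hmaps
  have hDelta_ae : AEMeasurable (fun x => ENNReal.ofReal (2/ε * (u (x+ε) - u x)^2))
      (volume.restrict Ω₀) := by
    refine ENNReal.measurable_ofReal.comp_aemeasurable ?_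
    refine AEMeasurable.const_mul ?_ _
    refine (AEMeasurable.sub ?_ ?_).pow_const 2
    · exact hushift_cont.aemeasurable hΩ₀meas
    · exact hucont0.aemeasurable hΩ₀meas
  have hstepB : (∫⁻ x in Ω₀, ENNReal.ofReal (ε * (u' x)^2)) ≤
      (∫⁻ x in Ω₀, ENNReal.ofReal (2/ε * (u (x+ε) - u x)^2)) +
        ENNReal.ofReal (2*ε^2) * ∫⁻ x in Ω₀, ∫⁻ t in Ioc x (x+ε), gB t := by
    calc (∫⁻ x in Ω₀, ENNReal.ofReal (ε * (u' x)^2))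
        ≤ ∫⁻ x in Ω₀, (ENNReal.ofReal (2/ε * (u (x+ε) - u x)^2) +
            ENNReal.ofReal (2*ε^2) * ∫⁻ t in Ioc x (x+ε), gB t) := by
          refine lintegral_mono_ae (ae_restrict_of_forall_mem hΩ₀meas ?_)
          intro x hx
          rw [← hRcongr x hx]
          exact hstepA x hx
      _ = _ := by
          rw [lintegral_add_left' hDelta_ae, lintegral_const_mul' _ _ ENNReal.ofReal_ne_top]
  -- Step C : Fubini for the second term
  have hstepC : ENNReal.ofReal (2*ε^2) * (∫⁻ x in Ω₀, ∫⁻ t in Ioc x (x+ε), gB t) ≤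
      ENNReal.ofReal 2 * E := by
    have hswap := swap_Ioc hΩ₀meas hgBmeas hε
    rw [hgBE] at hswap
    calc ENNReal.ofReal (2*ε^2) * (∫⁻ x in Ω₀, ∫⁻ t in Ioc x (x+ε), gB t)
        ≤ ENNReal.ofReal (2*ε^2) * (ENNReal.ofReal ε * EB) := mul_le_mul_right hswap _
      _ = ENNReal.ofReal 2 * (ENNReal.ofReal (ε^3) * EB) := by
          rw [← mul_assoc, ← ENNReal.ofReal_mul (by positivity), ← mul_assoc,
            ← ENNReal.ofReal_mul (by norm_num)]
          ring_nf
      _ ≤ ENNReal.ofReal 2 * E := mul_le_mul_right hEB_le _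
  -- Step D : decomposition of the difference term, with transition set G
  set Z : Set ℝ := Icc a₀ (b₀+ε) ∩ u ⁻¹' {0} with hZdef
  have hIccZΩ : Icc a₀ (b₀+ε) ⊆ Ω := fun t ht =>
    ⟨lt_of_lt_of_le haa ht.1, by linarith [ht.2]⟩
  have hZclosed : IsClosed Z :=
    (hucont.mono hIccZΩ).preimage_isClosed_of_isClosed isClosed_Icc isClosed_singleton
  have hZcompact : IsCompact Z :=
    isCompact_Icc.of_isClosed_subset hZclosed inter_subset_left
  set G : Set ℝ := Ω₀ ∩ (Z + Icc (-ε) 0) with hGdef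
  have hGmeas : MeasurableSet G :=
    hΩ₀meas.inter (hZcompact.add isCompact_Icc).measurableSet
  have hGmem : ∀ x, x ∈ G ↔ x ∈ Ω₀ ∧ ∃ z, z ∈ Z ∧ z - ε ≤ x ∧ x ≤ z := by
    intro x
    constructor
    · rintro ⟨hx1, hx2⟩
      obtain ⟨z, hz, d, hd, hzd⟩ := Set.mem_add.mp hx2
      exact ⟨hx1, z, hz, by linarith [hd.1, hzd ▸ le_refl (z+d)], by linarith [hd.2]⟩
    · rintro ⟨hx1, z, hz, h1', h2'⟩
      refine ⟨hx1, Set.mem_add.mpr ⟨z, hz, x - z, ⟨by linarith, by linarith⟩, by ring⟩⟩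
  have hstepD : ∀ x ∈ Ω₀, ENNReal.ofReal (2/ε * (u (x+ε) - u x)^2) ≤
      ENNReal.ofReal (6/ε) * (ENNReal.ofReal (A x) + ENNReal.ofReal (A (x+ε))) +
        ENNReal.ofReal (24/ε) * G.indicator 1 x := by
    intro x hx
    have hxw := hwin1 x hx
    have hx1m : x ∈ Icc x (x+ε) := ⟨le_rfl, by linarith⟩
    have hx2m : x+ε ∈ Icc x (x+ε) := ⟨by linarith, le_rfl⟩
    have hAx : A x = ((u x)^2 - 1)^2 := by rw [hAdef]
    have hAx' : A (x+ε) = ((u (x+ε))^2 - 1)^2 := by rw [hAdef]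
    by_cases hxG : x ∈ G
    · -- transition case
      rw [indicator_of_mem hxG, Pi.one_apply, mul_one]
      have h1' := abs_le_abs_sq_sub_one_add_one (u x)
      have h2' := abs_le_abs_sq_sub_one_add_one (u (x+ε))
      have habsΔ : |u (x+ε) - u x| ≤ |(u (x+ε))^2 - 1| + |(u x)^2 - 1| + 2 := by
        have := abs_sub (u (x+ε)) (u x)
        linarith
      have hd2 : (u (x+ε) - u x)^2 ≤ 3*(A (x+ε)) + 3*(A x) + 12 := by
        rw [hAx, hAx']
        nlinarith [sq_abs (u (x+ε) - u x), abs_nonneg (u (x+ε) - u x),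
          sq_abs ((u (x+ε))^2 - 1), sq_abs ((u x)^2 - 1),
          sq_nonneg (|(u (x+ε))^2 - 1| - |(u x)^2 - 1|),
          sq_nonneg (|(u (x+ε))^2 - 1| - 2), sq_nonneg (|(u x)^2 - 1| - 2),
          abs_nonneg ((u (x+ε))^2 - 1), abs_nonneg ((u x)^2 - 1)]
      have hfin : 2/ε * (u (x+ε) - u x)^2 ≤ 6/ε * A x + 6/ε * A (x+ε) + 24/ε := by
        have hm := mul_le_mul_of_nonneg_left hd2 (by positivity : (0:ℝ) ≤ 2/ε)
        have heq : 2/ε * (3*(A (x+ε)) + 3*(A x) + 12) = 6/ε * A x + 6/ε * A (x+ε) + 24/ε := by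
          ring
        linarith
      calc ENNReal.ofReal (2/ε * (u (x+ε) - u x)^2)
          ≤ ENNReal.ofReal (6/ε * A x + 6/ε * A (x+ε) + 24/ε) := ENNReal.ofReal_le_ofReal hfin
        _ = ENNReal.ofReal (6/ε) * (ENNReal.ofReal (A x) + ENNReal.ofReal (A (x+ε))) +
            ENNReal.ofReal (24/ε) := by
            rw [ENNReal.ofReal_add (by positivity) (by positivity),
              ENNReal.ofReal_add (by positivity) (by positivity),
              ENNReal.ofReal_mul (by positivity), ENNReal.ofReal_mul (by positivity), mul_add]
    · -- no transition : u has constant sign on the window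
      rw [indicator_of_notMem hxG, mul_zero, add_zero]
      have hnz : ∀ t ∈ Icc x (x+ε), u t ≠ 0 := by
        intro t ht h0
        refine hxG ((hGmem x).mpr ⟨hx, t, ?_, by linarith [ht.2], ht.1⟩)
        exact ⟨⟨by linarith [hx.1, ht.1], by linarith [hx.2, ht.2]⟩, h0⟩
      have hsign : (∀ t ∈ Icc x (x+ε), 0 < u t) ∨ (∀ t ∈ Icc x (x+ε), u t < 0) := by
        rcases lt_or_gt_of_ne (hnz x hx1m) with hneg | hpos
        · right
          intro t ht
          by_contra hcon
          push_neg at hcon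
          have hsub' : uIcc x t ⊆ Icc x (x+ε) := (Set.ordConnected_Icc).uIcc_subset hx1m ht
          obtain ⟨s, hs, hs0⟩ := intermediate_value_uIcc
            ((hucont.mono hxw).mono hsub') (mem_uIcc.mpr (Or.inl ⟨hneg.le, hcon⟩))
          exact hnz s (hsub' hs) hs0
        · left
          intro t ht
          by_contra hcon
          push_neg at hcon
          have hsub' : uIcc x t ⊆ Icc x (x+ε) := (Set.ordConnected_Icc).uIcc_subset hx1m ht
          obtain ⟨s, hs, hs0⟩ := intermediate_value_uIcc
            ((hucont.mono hxw).mono hsub') (mem_uIcc.mpr (Or.inr ⟨hcon, hpos.le⟩))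
          exact hnz s (hsub' hs) hs0
      have hd2 : (u (x+ε) - u x)^2 ≤ 2*(A (x+ε)) + 2*(A x) := by
        rw [hAx, hAx']
        rcases hsign with hpos | hneg
        · have e1 := abs_sub_one_le (u x) (hpos x hx1m).le
          have e2 := abs_sub_one_le (u (x+ε)) (hpos _ hx2m).le
          have htri : |u (x+ε) - u x| ≤ |u (x+ε) - 1| + |u x - 1| := by
            have h := abs_sub (u (x+ε) - 1) (u x - 1)
            have heq : (u (x+ε) - 1) - (u x - 1) = u (x+ε) - u x := by ring
            rw [heq] at h
            exact h
          nlinarith [sq_abs (u (x+ε) - u x), abs_nonneg (u (x+ε) - u x),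
            sq_abs (u (x+ε) - 1), sq_abs (u x - 1),
            sq_abs ((u (x+ε))^2 - 1), sq_abs ((u x)^2 - 1),
            sq_nonneg (|u (x+ε) - 1| - |u x - 1|),
            abs_nonneg (u (x+ε) - 1), abs_nonneg (u x - 1),
            abs_nonneg ((u (x+ε))^2 - 1), abs_nonneg ((u x)^2 - 1),
            mul_le_mul e2 e2 (abs_nonneg _) (abs_nonneg _),
            mul_le_mul e1 e1 (abs_nonneg _) (abs_nonneg _)]
        · have e1 := abs_sub_one_le (-(u x)) (by linarith [hneg x hx1m])
          have e2 := abs_sub_one_le (-(u (x+ε))) (by linarith [hneg _ hx2m])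
          rw [neg_sq] at e1 e2
          have htri : |u (x+ε) - u x| ≤ |-(u (x+ε)) - 1| + |-(u x) - 1| := by
            have h := abs_sub (-(u x) - 1) (-(u (x+ε)) - 1)
            have heq : (-(u x) - 1) - (-(u (x+ε)) - 1) = u (x+ε) - u x := by ring
            rw [heq] at h
            linarith
          nlinarith [sq_abs (u (x+ε) - u x), abs_nonneg (u (x+ε) - u x),
            sq_abs (-(u (x+ε)) - 1), sq_abs (-(u x) - 1),
            sq_abs ((u (x+ε))^2 - 1), sq_abs ((u x)^2 - 1),
            sq_nonneg (|-(u (x+ε)) - 1| - |-(u x) - 1|),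
            abs_nonneg (-(u (x+ε)) - 1), abs_nonneg (-(u x) - 1),
            abs_nonneg ((u (x+ε))^2 - 1), abs_nonneg ((u x)^2 - 1),
            mul_le_mul e2 e2 (abs_nonneg _) (abs_nonneg _),
            mul_le_mul e1 e1 (abs_nonneg _) (abs_nonneg _)]
      have hfin : 2/ε * (u (x+ε) - u x)^2 ≤ 6/ε * A x + 6/ε * A (x+ε) := by
        have hm := mul_le_mul_of_nonneg_left hd2 (by positivity : (0:ℝ) ≤ 2/ε)
        have heq : 2/ε * (2*(A (x+ε)) + 2*(A x)) = 4/ε * A x + 4/ε * A (x+ε) := by ring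
        have hApos1 : 0 ≤ 2/ε * A x := by positivity
        have hApos2 : 0 ≤ 2/ε * A (x+ε) := by positivity
        have h4 : 4/ε * A x + 2/ε * A x = 6/ε * A x := by ring
        have h5 : 4/ε * A (x+ε) + 2/ε * A (x+ε) = 6/ε * A (x+ε) := by ring
        linarith
      calc ENNReal.ofReal (2/ε * (u (x+ε) - u x)^2)
          ≤ ENNReal.ofReal (6/ε * A x + 6/ε * A (x+ε)) := ENNReal.ofReal_le_ofReal hfin
        _ = ENNReal.ofReal (6/ε) * (ENNReal.ofReal (A x) + ENNReal.ofReal (A (x+ε))) := by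
            rw [ENNReal.ofReal_add (by positivity) (by positivity),
              ENNReal.ofReal_mul (by positivity), ENNReal.ofReal_mul (by positivity), mul_add]
  -- integrate step D
  have hAΩ₀ae : AEMeasurable (fun x => ENNReal.ofReal (A x)) (volume.restrict Ω₀) :=
    hAae.mono_measure (Measure.restrict_mono hΩ₀Ω le_rfl)
  have hAshift_ae : AEMeasurable (fun x => ENNReal.ofReal (A (x+ε))) (volume.restrict Ω₀) := by
    refine ENNReal.measurable_ofReal.comp_aemeasurable ?_
    refine AEMeasurable.pow_const ?_ 2
    refine AEMeasurable.sub ?_ aemeasurable_const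
    exact (hushift_cont.aemeasurable hΩ₀meas).pow_const 2
  have hstepDint : (∫⁻ x in Ω₀, ENNReal.ofReal (2/ε * (u (x+ε) - u x)^2)) ≤
      ENNReal.ofReal (6/ε) * ((∫⁻ x in Ω₀, ENNReal.ofReal (A x)) +
        ∫⁻ x in Ω₀, ENNReal.ofReal (A (x+ε))) + ENNReal.ofReal (24/ε) * volume G := by
    calc (∫⁻ x in Ω₀, ENNReal.ofReal (2/ε * (u (x+ε) - u x)^2))
        ≤ ∫⁻ x in Ω₀, (ENNReal.ofReal (6/ε) * (ENNReal.ofReal (A x) + ENNReal.ofReal (A (x+ε))) +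
            ENNReal.ofReal (24/ε) * G.indicator 1 x) :=
          lintegral_mono_ae (ae_restrict_of_forall_mem hΩ₀meas hstepD)
      _ = ENNReal.ofReal (6/ε) * ((∫⁻ x in Ω₀, ENNReal.ofReal (A x)) +
            ∫⁻ x in Ω₀, ENNReal.ofReal (A (x+ε))) + ENNReal.ofReal (24/ε) * volume G := by
          rw [lintegral_add_left' (show AEMeasurable (fun x => ENNReal.ofReal (6/ε) * (ENNReal.ofReal (A x) + ENNReal.ofReal (A (x+ε)))) (volume.restrict Ω₀) from (hAΩ₀ae.add hAshift_ae).const_mul _),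
            lintegral_const_mul' _ _ ENNReal.ofReal_ne_top,
            lintegral_const_mul' _ _ ENNReal.ofReal_ne_top,
            lintegral_add_left' hAΩ₀ae]
          congr 1
          have hind : ∫⁻ x in Ω₀, G.indicator 1 x = volume G := by
            rw [lintegral_indicator hGmeas]
            simp only [Pi.one_apply]
            rw [setLIntegral_one, Measure.restrict_apply' hΩ₀meas,
              inter_eq_self_of_subset_left inter_subset_left]
          rw [hind]
  -- middle term bounds
  have hAmid : (∫⁻ x in Ω₀, ENNReal.ofReal (A x)) ≤ EA :=
    lintegral_mono' (Measure.restrict_mono hΩ₀Ω le_rfl) le_rfl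
  have hAshift_le : (∫⁻ x in Ω₀, ENNReal.ofReal (A (x+ε))) ≤ EA := by
    have hbad : volume ({t | ¬ gA t = ENNReal.ofReal (A t)} ∩ Ω) = 0 := by
      have h := hgAeq
      rw [EventuallyEq, ae_iff] at h
      rwa [Measure.restrict_apply' hΩmeas] at h
    have haeshift : (fun x => ENNReal.ofReal (A (x+ε))) =ᵐ[volume.restrict Ω₀]
        (fun x => gA (x+ε)) := by
      rw [EventuallyEq, ae_iff, Measure.restrict_apply' hΩ₀meas]
      refine measure_mono_null ?_ (null_preimage_add hbad ε)
      rintro x ⟨hx1, hx2⟩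
      refine ⟨fun h => hx1 h.symm, ?_⟩
      exact ⟨show a < x + ε by linarith [hx2.1], show x + ε < b by linarith [hx2.2]⟩
    calc (∫⁻ x in Ω₀, ENNReal.ofReal (A (x+ε))) = ∫⁻ x in Ω₀, gA (x+ε) :=
          lintegral_congr_ae haeshift
      _ ≤ ∫⁻ x, gA (x+ε) := setLIntegral_le_lintegral _ _
      _ = ∫⁻ t, gA t := lintegral_add_right_eq_self gA ε
      _ = EA := hgAint
  -- Step E : counting the transitions
  have hstepE : volume G ≤ ENNReal.ofReal (128*ε) * E := by
    have hG1 : ∀ x ∈ G, ENNReal.ofReal (3/128) ≤ ∫⁻ t in Ioo x (x+3*ε), e₀ t := by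
      intro x hxG
      obtain ⟨hxΩ₀, z, hzZ, hz1, hz2⟩ := (hGmem x).mp hxG
      have hw3 : Icc x (x+3*ε) ⊆ Ω := hwin3 x hxΩ₀
      have htr := trans_lemma hε h1 h2 hint hint2
        (⟨hz2, by linarith⟩ : z ∈ Icc x (x+ε)) hzZ.2 hw3
      refine le_trans htr (le_of_eq (lintegral_congr_ae ?_))
      have hsub' : Ioo x (x+3*ε) ⊆ Ω := Ioo_subset_Icc_self.trans hw3
      exact (he₀eq.filter_mono (ae_mono (Measure.restrict_mono hsub' le_rfl))).symm
    have hcb := counting_bound hGmeas he₀meas (by positivity : (0:ℝ) < 3*ε) hG1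
    rw [he₀E] at hcb
    calc volume G = ENNReal.ofReal (128/3) * (ENNReal.ofReal (3/128) * volume G) := by
          rw [← mul_assoc, ← ENNReal.ofReal_mul (by norm_num)]
          norm_num
      _ ≤ ENNReal.ofReal (128/3) * (ENNReal.ofReal (3*ε) * E) := mul_le_mul_right hcb _
      _ = ENNReal.ofReal (128*ε) * E := by
          rw [← mul_assoc, ← ENNReal.ofReal_mul (by norm_num)]
          congr 2
          ring
  -- combine everything
  have hT12 : ENNReal.ofReal (6/ε) * ((∫⁻ x in Ω₀, ENNReal.ofReal (A x)) +
      ∫⁻ x in Ω₀, ENNReal.ofReal (A (x+ε))) ≤ ENNReal.ofReal 12 * E := by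
    calc ENNReal.ofReal (6/ε) * ((∫⁻ x in Ω₀, ENNReal.ofReal (A x)) +
          ∫⁻ x in Ω₀, ENNReal.ofReal (A (x+ε)))
        ≤ ENNReal.ofReal (6/ε) * (EA + EA) := mul_le_mul_right (add_le_add hAmid hAshift_le) _
      _ ≤ ENNReal.ofReal (6/ε) * (ENNReal.ofReal ε * E + ENNReal.ofReal ε * E) :=
          mul_le_mul_right (add_le_add hEA_bound hEA_bound) _
      _ = ENNReal.ofReal 12 * E := by
          rw [← two_mul, ← mul_assoc, ← mul_assoc, ← ENNReal.ofReal_ofNat (n := 2),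
            ← ENNReal.ofReal_mul (by positivity), ← ENNReal.ofReal_mul (by positivity)]
          congr 2
          field_simp
          ring
  have hT3 : ENNReal.ofReal (24/ε) * volume G ≤ ENNReal.ofReal 3072 * E := by
    calc ENNReal.ofReal (24/ε) * volume G
        ≤ ENNReal.ofReal (24/ε) * (ENNReal.ofReal (128*ε) * E) := mul_le_mul_right hstepE _
      _ = ENNReal.ofReal 3072 * E := by
          rw [← mul_assoc, ← ENNReal.ofReal_mul (by positivity)]
          congr 2
          field_simp
          ring
  calc (∫⁻ x in Ω₀, ENNReal.ofReal (ε * (u' x)^2))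
      ≤ (∫⁻ x in Ω₀, ENNReal.ofReal (2/ε * (u (x+ε) - u x)^2)) +
        ENNReal.ofReal (2*ε^2) * ∫⁻ x in Ω₀, ∫⁻ t in Ioc x (x+ε), gB t := hstepB
    _ ≤ (ENNReal.ofReal (6/ε) * ((∫⁻ x in Ω₀, ENNReal.ofReal (A x)) +
          ∫⁻ x in Ω₀, ENNReal.ofReal (A (x+ε))) + ENNReal.ofReal (24/ε) * volume G) +
        ENNReal.ofReal 2 * E := add_le_add hstepDint hstepC
    _ ≤ (ENNReal.ofReal 12 * E + ENNReal.ofReal 3072 * E) + ENNReal.ofReal 2 * E :=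
        add_le_add (add_le_add hT12 hT3) le_rfl
    _ ≤ ENNReal.ofReal 4000 * E := by
        rw [← add_mul, ← add_mul, ← ENNReal.ofReal_add (by norm_num) (by norm_num),
          ← ENNReal.ofReal_add (by norm_num) (by norm_num)]
        exact mul_le_mul_left (ENNReal.ofReal_le_ofReal (by norm_num)) _

end AuxiliaryInterpolation

/-- Interpolation inequality.  There is a universal constant
`C' > 0` such that for any data as in the second-order problem with
`(a₀,b₀) ⋐ (a,b)`, one has `∫_{Ω₀} εₙ|uₙ'|² ≤ C' ∫_Ω εₙ⁻¹(uₙ²-1)² + εₙ³|uₙ''|²`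
for all sufficiently large `n`. -/
theorem statement_3 :
    ∃ C' > (0:ℝ), ∀ a b a₀ b₀ p : ℝ, a < b → a < a₀ → a₀ < b₀ → b₀ < b →
      1 ≤ p → p ≤ 4 →
      ∀ ε : ℕ → ℝ, (∀ n, 0 < ε n) → Tendsto ε atTop (𝓝 0) →
      ∀ u u' u'' : ℕ → ℝ → ℝ,
        (∀ n, IsW2On (Set.Ioo a b) (ENNReal.ofReal p) (u n) (u' n) (u'' n)) →
        (∃ M : ℝ≥0∞, M ≠ ⊤ ∧ ∀ n,
          (∫⁻ x in Set.Ioo a b, ENNReal.ofReal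
            ((ε n)⁻¹ * ((u n x) ^ 2 - 1) ^ 2 + (ε n) ^ 3 * (u'' n x) ^ 2)) ≤ M) →
        ∀ᶠ n in atTop,
          (∫⁻ x in Set.Ioo a₀ b₀, ENNReal.ofReal (ε n * (u' n x) ^ 2)) ≤
            ENNReal.ofReal C' * ∫⁻ x in Set.Ioo a b, ENNReal.ofReal
              ((ε n)⁻¹ * ((u n x) ^ 2 - 1) ^ 2 + (ε n) ^ 3 * (u'' n x) ^ 2) := by
  refine ⟨4000, by norm_num, ?_⟩
  intro a b a₀ b₀ p hab haa h00 hbb hp1 hp4 ε hεpos hεto u u' u'' hW hM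
  have h3pos : (0:ℝ) < (b - b₀)/3 := by linarith
  have hev : ∀ᶠ n in atTop, ε n < (b - b₀)/3 := hεto.eventually_lt_const h3pos
  filter_upwards [hev] with n hn
  obtain ⟨h1, h2, hu, hu', hu''⟩ := hW n
  haveI : IsFiniteMeasure (volume.restrict (Set.Ioo a b)) :=
    ⟨by rw [Measure.restrict_apply_univ]; exact measure_Ioo_lt_top⟩
  have hint : IntegrableOn (u'' n) (Set.Ioo a b) volume :=
    hu''.integrable (ENNReal.one_le_ofReal.mpr hp1)
  have hmeas2 : AEMeasurable (u'' n) (volume.restrict (Set.Ioo a b)) :=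
    hu''.aestronglyMeasurable.aemeasurable
  have hε3 : b₀ + 3 * ε n ≤ b := by linarith
  exact main_n hab haa h00 hbb (hεpos n) hε3 h1 h2 hint hmeas2


end
end

section
/- Let T > 0 and A, m ∈ ℝ with m ≠ 0. Then for every k ∈ ℕ there exists a constant C_k > 0 depending only on k such that there is a function f : [0,T] → ℝ satisfying: (i) f is C^∞ on [0,T]; (ii) f(0) = A, f'(0) = m, f(T) = 0, f'(T) = 0; (iii) ∫₀^T |f^{(k)}(x)|² dx ≤ C_k (A² + m²T²) T^{1−2k} for every k; (iv) sup_{x∈[0,T]} |f(x)| ≤ |A| + (1/2)|m|·T. -/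
open MeasureTheory Set Filter Topology
open scoped ENNReal NNReal

noncomputable section

set_option maxHeartbeats 1000000

lemma cubic_hasDerivAt (a b c d x : ℝ) :
    HasDerivAt (fun y => a + b*y + c*y^2 + d*y^3) (b + 2*c*x + 3*d*x^2 + 0*x^3) x := by
  have h := (((hasDerivAt_const x a).add ((hasDerivAt_id x).const_mul b)).add
    ((hasDerivAt_pow 2 x).const_mul c)).add ((hasDerivAt_pow 3 x).const_mul d)
  refine h.congr_deriv ?_
  push_cast; ring

lemma cubic_deriv (a b c d : ℝ) :
    deriv (fun y => a + b*y + c*y^2 + d*y^3) = fun x => b + 2*c*x + 3*d*x^2 + 0*x^3 :=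
  funext fun x => (cubic_hasDerivAt a b c d x).deriv

lemma cubic_cont (a b c d : ℝ) : Continuous (fun y : ℝ => a + b*y + c*y^2 + d*y^3) := by
  continuity

lemma cubic_smooth (a b c d : ℝ) : ContDiff ℝ (⊤ : ℕ∞) (fun y : ℝ => a + b*y + c*y^2 + d*y^3) := by
  apply ContDiff.add
  apply ContDiff.add
  apply ContDiff.add
  · exact contDiff_const
  · exact contDiff_const.mul contDiff_id
  · exact contDiff_const.mul (contDiff_id.pow 2)
  · exact contDiff_const.mul (contDiff_id.pow 3)

lemma integral_sq_le {T B : ℝ} (hT : 0 < T) (g : ℝ → ℝ) (hg : Continuous g)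
    (hb : ∀ x ∈ Set.Icc 0 T, (g x)^2 ≤ B) :
    (∫ x in Set.Ioo 0 T, (g x)^2) ≤ B * T := by
  have hint : IntegrableOn (fun x => (g x)^2) (Set.Ioo 0 T) :=
    (((hg.pow 2).continuousOn).integrableOn_compact isCompact_Icc).mono_set
      Set.Ioo_subset_Icc_self
  have h2 : (∫ x in Set.Ioo 0 T, (g x)^2) ≤ ∫ _x in Set.Ioo 0 T, B := by
    refine setIntegral_mono_on hint ?_ measurableSet_Ioo (fun x hx => hb x ⟨hx.1.le, hx.2.le⟩)
    exact integrableOn_const (by rw [Real.volume_Ioo]; exact ENNReal.ofReal_ne_top)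
  calc (∫ x in Set.Ioo 0 T, (g x)^2) ≤ ∫ _x in Set.Ioo 0 T, B := h2
    _ = B * T := by
        rw [setIntegral_const, Real.volume_real_Ioo_of_le hT.le, smul_eq_mul]
        ring

lemma core1 (A u s : ℝ) (h0 : 0 ≤ s) (h1 : s ≤ 1) :
    (u - 2*(3*A+2*u)*s + 3*(2*A+u)*s^2)^2 ≤ 435*(A^2+u^2) := by
  have hq : (3*A+2*u)^2 ≤ 18*(A^2+u^2) := by nlinarith [sq_nonneg (3*A-2*u)]
  have hr : (2*A+u)^2 ≤ 8*(A^2+u^2) := by nlinarith [sq_nonneg (2*A-u)]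
  have hs2 : s^2 ≤ 1 := by nlinarith
  have hs4 : s^4 ≤ 1 := by nlinarith
  have hq2 : (3*A+2*u)^2*s^2 ≤ 18*(A^2+u^2) := by
    calc (3*A+2*u)^2*s^2 ≤ (18*(A^2+u^2))*1 :=
          mul_le_mul hq hs2 (sq_nonneg s) (by positivity)
      _ = 18*(A^2+u^2) := by ring
  have hr2 : (2*A+u)^2*s^4 ≤ 8*(A^2+u^2) := by
    calc (2*A+u)^2*s^4 ≤ (8*(A^2+u^2))*1 :=
          mul_le_mul hr hs4 (by positivity) (by positivity)
      _ = 8*(A^2+u^2) := by ring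
  nlinarith [sq_nonneg (u + 2*(3*A+2*u)*s), sq_nonneg (u - 3*(2*A+u)*s^2),
    sq_nonneg (2*(3*A+2*u)*s + 3*(2*A+u)*s^2)]

lemma core2 (A u s : ℝ) (h0 : 0 ≤ s) (h1 : s ≤ 1) :
    (-2*(3*A+2*u) + 6*(2*A+u)*s)^2 ≤ 720*(A^2+u^2) := by
  nlinarith [sq_nonneg (A+u), sq_nonneg (A-u), sq_nonneg (2*(3*A+2*u) + 6*(2*A+u)*s),
    mul_nonneg (sub_nonneg.2 h1) (sq_nonneg (2*A+u)), mul_nonneg h0 (sq_nonneg (2*A+u)),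
    mul_nonneg (mul_nonneg h0 h0) (sq_nonneg (2*A+u))]

lemma core3 (A u : ℝ) : (6*(2*A+u))^2 ≤ 288*(A^2+u^2) := by
  nlinarith [sq_nonneg (A-u), sq_nonneg (A+u)]

lemma coreg1 (s : ℝ) (h0 : 0 ≤ s) (h1 : s ≤ 1) : (1-s)^2*(1+2*s) ≤ 1 := by
  nlinarith [mul_nonneg (sq_nonneg s) (by linarith : (0:ℝ) ≤ 3 - 2*s)]

lemma coreg2 (s : ℝ) (h0 : 0 ≤ s) (h1 : s ≤ 1) : s*(1-s)^2 ≤ 1/2 := by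
  nlinarith [sq_nonneg (s-1/2), sq_nonneg s, sq_nonneg (1-s)]

/-- Smooth gluing lemma.  There are constants `C k > 0`
depending only on `k` such that for all `T > 0` and `A, m ∈ ℝ` with `m ≠ 0`,
there is a smooth `f` with `f(0) = A`, `f'(0) = m`, `f(T) = 0`, `f'(T) = 0`,
`∫₀^T |f^{(k)}|² ≤ C k (A² + m²T²) T^{1-2k}` for every `k`, and
`sup_{[0,T]} |f| ≤ |A| + |m|T/2`. -/
theorem statement_6 :
    ∃ C : ℕ → ℝ, (∀ k, 0 < C k) ∧
      ∀ T A m : ℝ, 0 < T → m ≠ 0 →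
        ∃ f : ℝ → ℝ, ContDiff ℝ (⊤ : ℕ∞) f ∧
          f 0 = A ∧ deriv f 0 = m ∧ f T = 0 ∧ deriv f T = 0 ∧
          (∀ k : ℕ, (∫ x in Set.Ioo 0 T, (iteratedDeriv k f x) ^ 2) ≤
            C k * ((A ^ 2 + m ^ 2 * T ^ 2) * T ^ (1 - 2 * (k : ℝ)))) ∧
          ∀ x ∈ Set.Icc 0 T, |f x| ≤ |A| + 1 / 2 * |m| * T := by
  refine ⟨fun _ => 1000, fun k => by norm_num, ?_⟩
  intro T A m hT hm
  have hT0 : T ≠ 0 := ne_of_gt hT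
  have hm2 : 0 < m^2 := by positivity
  have hQ : 0 < A^2 + m^2*T^2 := by nlinarith [sq_nonneg A, mul_pos hm2 (pow_pos hT 2)]
  have hsup : ∀ x ∈ Set.Icc (0:ℝ) T,
      |A + m*x + (-(3*A+2*m*T)/T^2)*x^2 + ((2*A+m*T)/T^3)*x^3| ≤ |A| + 1 / 2 * |m| * T := by
    intro x hx
    have hs0 : 0 ≤ x/T := div_nonneg hx.1 hT.le
    have hs1 : x/T ≤ 1 := (div_le_one hT).2 hx.2
    have hrep : A + m*x + (-(3*A+2*m*T)/T^2)*x^2 + ((2*A+m*T)/T^3)*x^3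
        = A*((1-x/T)^2*(1+2*(x/T))) + (m*T)*((x/T)*(1-x/T)^2) := by
      field_simp; ring
    rw [hrep]
    have g1a : 0 ≤ (1-x/T)^2*(1+2*(x/T)) := mul_nonneg (sq_nonneg _) (by linarith)
    have g1b := coreg1 (x/T) hs0 hs1
    have g2a : 0 ≤ (x/T)*(1-x/T)^2 := mul_nonneg hs0 (sq_nonneg _)
    have g2b := coreg2 (x/T) hs0 hs1
    refine (abs_add_le _ _).trans ?_
    have h1 : |A*((1-x/T)^2*(1+2*(x/T)))| ≤ |A| * 1 := by
      rw [abs_mul, abs_of_nonneg g1a]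
      exact mul_le_mul_of_nonneg_left g1b (abs_nonneg A)
    have h2 : |(m*T)*((x/T)*(1-x/T)^2)| ≤ (|m| * T)*(1/2) := by
      rw [abs_mul, abs_of_nonneg g2a, abs_mul, abs_of_pos hT]
      exact mul_le_mul_of_nonneg_left g2b (by positivity)
    nlinarith [h1, h2]
  refine ⟨fun x => A + m*x + (-(3*A+2*m*T)/T^2)*x^2 + ((2*A+m*T)/T^3)*x^3,
    cubic_smooth _ _ _ _, by norm_num, ?_, by field_simp; ring, ?_, ?_, hsup⟩
  · rw [cubic_deriv]; norm_num
  · rw [cubic_deriv]; field_simp; ring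
  · -- derivatives chain
    have i1 : iteratedDeriv 1 (fun x => A + m*x + (-(3*A+2*m*T)/T^2)*x^2 + ((2*A+m*T)/T^3)*x^3)
        = fun x => m + 2*(-(3*A+2*m*T)/T^2)*x + 3*((2*A+m*T)/T^3)*x^2 + 0*x^3 := by
      rw [iteratedDeriv_one, cubic_deriv]
    have i2 : iteratedDeriv 2 (fun x => A + m*x + (-(3*A+2*m*T)/T^2)*x^2 + ((2*A+m*T)/T^3)*x^3)
        = fun x => 2*(-(3*A+2*m*T)/T^2) + 2*(3*((2*A+m*T)/T^3))*x + 3*0*x^2 + 0*x^3 := by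
      rw [iteratedDeriv_succ, i1, cubic_deriv]
    have i3 : iteratedDeriv 3 (fun x => A + m*x + (-(3*A+2*m*T)/T^2)*x^2 + ((2*A+m*T)/T^3)*x^3)
        = fun x => 2*(3*((2*A+m*T)/T^3)) + 2*(3*0)*x + 3*0*x^2 + 0*x^3 := by
      rw [iteratedDeriv_succ, i2, cubic_deriv]
    have i4 : ∀ n, iteratedDeriv (n+4) (fun x => A + m*x + (-(3*A+2*m*T)/T^2)*x^2 + ((2*A+m*T)/T^3)*x^3)
        = fun x => 2*(3*0) + 2*(3*0)*x + 3*0*x^2 + 0*x^3 := by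
      intro n
      induction n with
      | zero => rw [show (0+4) = 3+1 from rfl, iteratedDeriv_succ, i3, cubic_deriv]
      | succ n ih => rw [show (n+1+4) = (n+4)+1 from rfl, iteratedDeriv_succ, ih, cubic_deriv]
    intro k
    match k with
    | 0 =>
      rw [iteratedDeriv_zero]
      have hb : ∀ x ∈ Set.Icc (0:ℝ) T,
          (A + m*x + (-(3*A+2*m*T)/T^2)*x^2 + ((2*A+m*T)/T^3)*x^3)^2 ≤ 2*(A^2+m^2*T^2) := by
        intro x hx
        have h := hsup x hx
        have h2 : |A + m*x + (-(3*A+2*m*T)/T^2)*x^2 + ((2*A+m*T)/T^3)*x^3|^2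
            ≤ (|A| + 1 / 2 * |m| * T)^2 := pow_le_pow_left₀ (abs_nonneg _) h 2
        rw [sq_abs] at h2
        nlinarith [h2, sq_abs A, sq_abs m, sq_nonneg (|A| - |m| * T), abs_nonneg A, abs_nonneg m]
      calc (∫ x in Set.Ioo 0 T, (A + m*x + (-(3*A+2*m*T)/T^2)*x^2 + ((2*A+m*T)/T^3)*x^3)^2)
          ≤ (2*(A^2+m^2*T^2)) * T := integral_sq_le hT _ (cubic_cont _ _ _ _) hb
        _ ≤ 1000 * ((A ^ 2 + m ^ 2 * T ^ 2) * T ^ (1 - 2 * ((0:ℕ) : ℝ))) := by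
            rw [show (1 - 2*((0:ℕ):ℝ)) = (1:ℝ) by norm_num, Real.rpow_one]
            nlinarith [mul_pos hQ hT]
    | 1 =>
      rw [i1]
      have hb : ∀ x ∈ Set.Icc (0:ℝ) T,
          (m + 2*(-(3*A+2*m*T)/T^2)*x + 3*((2*A+m*T)/T^3)*x^2 + 0*x^3)^2
            ≤ 435*(A^2+m^2*T^2)/T^2 := by
        intro x hx
        have hs0 : 0 ≤ x/T := div_nonneg hx.1 hT.le
        have hs1 : x/T ≤ 1 := (div_le_one hT).2 hx.2
        have hrep : m + 2*(-(3*A+2*m*T)/T^2)*x + 3*((2*A+m*T)/T^3)*x^2 + 0*x^3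
            = (m*T - 2*(3*A+2*(m*T))*(x/T) + 3*(2*A+(m*T))*(x/T)^2)/T := by
          field_simp; ring
        rw [hrep, div_pow]
        rw [div_le_div_iff₀ (by positivity) (by positivity)]
        have h := core1 A (m*T) (x/T) hs0 hs1
        nlinarith [mul_le_mul_of_nonneg_right h (sq_nonneg T)]
      calc (∫ x in Set.Ioo 0 T, (m + 2*(-(3*A+2*m*T)/T^2)*x + 3*((2*A+m*T)/T^3)*x^2 + 0*x^3)^2)
          ≤ (435*(A^2+m^2*T^2)/T^2) * T := integral_sq_le hT _ (cubic_cont _ _ _ _) hb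
        _ ≤ 1000 * ((A ^ 2 + m ^ 2 * T ^ 2) * T ^ (1 - 2 * ((1:ℕ) : ℝ))) := by
            rw [show (1 - 2*((1:ℕ):ℝ)) = -(1:ℝ) by norm_num, Real.rpow_neg hT.le, Real.rpow_one]
            have heq : (435*(A^2+m^2*T^2)/T^2) * T = 435*((A^2+m^2*T^2)*T⁻¹) := by
              field_simp
            rw [heq]
            nlinarith [mul_pos hQ (inv_pos.2 hT)]
    | 2 =>
      rw [i2]
      have hb : ∀ x ∈ Set.Icc (0:ℝ) T,
          (2*(-(3*A+2*m*T)/T^2) + 2*(3*((2*A+m*T)/T^3))*x + 3*0*x^2 + 0*x^3)^2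
            ≤ 720*(A^2+m^2*T^2)/T^4 := by
        intro x hx
        have hs0 : 0 ≤ x/T := div_nonneg hx.1 hT.le
        have hs1 : x/T ≤ 1 := (div_le_one hT).2 hx.2
        have hrep : 2*(-(3*A+2*m*T)/T^2) + 2*(3*((2*A+m*T)/T^3))*x + 3*0*x^2 + 0*x^3
            = (-2*(3*A+2*(m*T)) + 6*(2*A+(m*T))*(x/T))/T^2 := by
          field_simp; ring
        rw [hrep, div_pow]
        rw [div_le_div_iff₀ (by positivity) (by positivity)]
        have h := core2 A (m*T) (x/T) hs0 hs1
        nlinarith [mul_le_mul_of_nonneg_right h (sq_nonneg (T^2))]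
      calc (∫ x in Set.Ioo 0 T, (2*(-(3*A+2*m*T)/T^2) + 2*(3*((2*A+m*T)/T^3))*x + 3*0*x^2 + 0*x^3)^2)
          ≤ (720*(A^2+m^2*T^2)/T^4) * T := integral_sq_le hT _ (cubic_cont _ _ _ _) hb
        _ ≤ 1000 * ((A ^ 2 + m ^ 2 * T ^ 2) * T ^ (1 - 2 * ((2:ℕ) : ℝ))) := by
            rw [show (1 - 2*((2:ℕ):ℝ)) = -(3:ℝ) by norm_num, Real.rpow_neg hT.le,
              show (3:ℝ) = ((3:ℕ):ℝ) by norm_num, Real.rpow_natCast]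
            have heq : (720*(A^2+m^2*T^2)/T^4) * T = 720*((A^2+m^2*T^2)*(T^(3:ℕ))⁻¹) := by
              field_simp
            rw [heq]
            nlinarith [mul_pos hQ (inv_pos.2 (pow_pos hT 3))]
    | 3 =>
      rw [i3]
      have hb : ∀ x ∈ Set.Icc (0:ℝ) T,
          (2*(3*((2*A+m*T)/T^3)) + 2*(3*0)*x + 3*0*x^2 + 0*x^3)^2
            ≤ 288*(A^2+m^2*T^2)/T^6 := by
        intro x _hx
        have hrep : 2*(3*((2*A+m*T)/T^3)) + 2*(3*0)*x + 3*0*x^2 + 0*x^3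
            = (6*(2*A+(m*T)))/T^3 := by field_simp; ring
        rw [hrep, div_pow]
        rw [div_le_div_iff₀ (by positivity) (by positivity)]
        have h := core3 A (m*T)
        nlinarith [mul_le_mul_of_nonneg_right h (sq_nonneg (T^3))]
      calc (∫ x in Set.Ioo 0 T, (2*(3*((2*A+m*T)/T^3)) + 2*(3*0)*x + 3*0*x^2 + 0*x^3)^2)
          ≤ (288*(A^2+m^2*T^2)/T^6) * T := integral_sq_le hT _ (cubic_cont _ _ _ _) hb
        _ ≤ 1000 * ((A ^ 2 + m ^ 2 * T ^ 2) * T ^ (1 - 2 * ((3:ℕ) : ℝ))) := by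
            rw [show (1 - 2*((3:ℕ):ℝ)) = -(5:ℝ) by norm_num, Real.rpow_neg hT.le,
              show (5:ℝ) = ((5:ℕ):ℝ) by norm_num, Real.rpow_natCast]
            have heq : (288*(A^2+m^2*T^2)/T^6) * T = 288*((A^2+m^2*T^2)*(T^(5:ℕ))⁻¹) := by
              field_simp
            rw [heq]
            nlinarith [mul_pos hQ (inv_pos.2 (pow_pos hT 5))]
    | (n+4) =>
      rw [i4 n]
      have hz : (∫ x in Set.Ioo (0:ℝ) T, ((2*(3*0) + 2*(3*0)*x + 3*0*x^2 + 0*x^3 : ℝ))^2)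
          = ∫ _x in Set.Ioo (0:ℝ) T, (0:ℝ) := by
        apply integral_congr_ae
        filter_upwards with x
        ring
      rw [hz, integral_zero]
      exact mul_nonneg (by norm_num)
        (mul_nonneg hQ.le (Real.rpow_nonneg hT.le _))

end
end

section
/- Let Ω = (a,b) be a non-empty bounded open interval and 1 ≤ p < ∞. For each ε > 0 define F_ε : L^p(Ω) → [−∞,∞] by F_ε(u) = ∫_Ω ε^{-1}(u²−1)² + ε³|u''|² dx if u ∈ W^{2,p}(Ω), and F_ε(u) = +∞ otherwise. Let ε_n be a sequence of positive reals with ε_n → 0⁺. If u ∈ L^p(Ω) is a function such that the set {x ∈ Ω : u(x) ∉ {−1,1}} has positive Lebesgue measure, then for every sequence u_n ∈ L^p(Ω) with u_n → u in L^p(Ω) one has lim_{n→∞} F_{ε_n}(u_n) = +∞. -/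
open MeasureTheory Set Filter Topology
open scoped ENNReal NNReal

noncomputable section

/-- Divergence off the wells.  If `u ∈ L^p(Ω)` differs from
`±1` on a set of positive measure, then `F_{εₙ}(uₙ) → +∞` for every sequence
`uₙ → u` in `L^p(Ω)`. -/
theorem statement_9 (a b p : ℝ) (hab : a < b) (hp1 : 1 ≤ p)
    (ε : ℕ → ℝ) (hεpos : ∀ n, 0 < ε n) (hε0 : Tendsto ε atTop (𝓝 0))
    (u : ℝ → ℝ)
    (hu : MemLp u (ENNReal.ofReal p) (volume.restrict (Set.Ioo a b)))
    (hbad : 0 < volume {x ∈ Set.Ioo a b | u x ≠ -1 ∧ u x ≠ 1})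
    (useq : ℕ → ℝ → ℝ)
    (huseq : ∀ n, MemLp (useq n) (ENNReal.ofReal p) (volume.restrict (Set.Ioo a b)))
    (hconv : TendstoLp (Set.Ioo a b) p useq u) :
    Tendsto (fun n => Ffun a b p (ε n) (useq n)) atTop (𝓝 ⊤) := by

  classical
  set μ := volume.restrict (Set.Ioo a b) with hμdef
  -- measurable representatives
  set U : ℝ → ℝ := hu.1.mk u with hUdef
  have hUsm : StronglyMeasurable U := hu.1.stronglyMeasurable_mk
  have hUae : u =ᵐ[μ] U := hu.1.ae_eq_mk
  set V : ℕ → ℝ → ℝ := fun n => (huseq n).1.mk (useq n) with hVdef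
  have hVsm : ∀ n, StronglyMeasurable (V n) := fun n => (huseq n).1.stronglyMeasurable_mk
  have hVae : ∀ n, useq n =ᵐ[μ] V n := fun n => (huseq n).1.ae_eq_mk
  -- the bad set for the representative has positive measure
  have hBpos : 0 < μ {x | U x ≠ -1 ∧ U x ≠ 1} := by
    have h1 : (0:ℝ≥0∞) < μ {x ∈ Set.Ioo a b | u x ≠ -1 ∧ u x ≠ 1} := by
      rw [hμdef, Measure.restrict_apply' measurableSet_Ioo,
        Set.inter_eq_self_of_subset_left (Set.sep_subset _ _)]
      exact hbad
    have hN : μ {x | u x ≠ U x} = 0 := by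
      have := hUae
      rw [Filter.EventuallyEq, ae_iff] at this
      simpa using this
    have hsub : {x ∈ Set.Ioo a b | u x ≠ -1 ∧ u x ≠ 1} ⊆
        {x | U x ≠ -1 ∧ U x ≠ 1} ∪ {x | u x ≠ U x} := by
      intro x hx
      by_cases h : u x = U x
      · exact Or.inl ⟨h ▸ hx.2.1, h ▸ hx.2.2⟩
      · exact Or.inr h
    calc (0:ℝ≥0∞) < μ {x ∈ Set.Ioo a b | u x ≠ -1 ∧ u x ≠ 1} := h1
      _ ≤ μ ({x | U x ≠ -1 ∧ U x ≠ 1} ∪ {x | u x ≠ U x}) := measure_mono hsub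
      _ ≤ μ {x | U x ≠ -1 ∧ U x ≠ 1} + μ {x | u x ≠ U x} := measure_union_le _ _
      _ = μ {x | U x ≠ -1 ∧ U x ≠ 1} := by rw [hN, add_zero]
  -- find δ > 0 with positive measure of the δ-far set
  obtain ⟨k, hk⟩ : ∃ k : ℕ,
      0 < μ {x | 1/((k:ℝ)+1) ≤ |U x - 1| ∧ 1/((k:ℝ)+1) ≤ |U x + 1|} := by
    by_contra h
    push_neg at h
    simp only [nonpos_iff_eq_zero] at h
    have hcover : {x | U x ≠ -1 ∧ U x ≠ 1} ⊆
        ⋃ k : ℕ, {x | 1/((k:ℝ)+1) ≤ |U x - 1| ∧ 1/((k:ℝ)+1) ≤ |U x + 1|} := by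
      rintro x ⟨h1, h2⟩
      have e1 : 0 < |U x - 1| := abs_pos.2 (sub_ne_zero.2 h2)
      have e2 : 0 < |U x + 1| := abs_pos.2 (by intro hh; apply h1; linarith)
      obtain ⟨j, hj⟩ := exists_nat_one_div_lt (lt_min e1 e2)
      exact Set.mem_iUnion.2 ⟨j, hj.le.trans (min_le_left _ _),
        hj.le.trans (min_le_right _ _)⟩
    have := (measure_mono hcover).trans_eq (measure_iUnion_null fun k => h k)
    exact absurd this hBpos.not_ge
  set δ : ℝ := 1/((k:ℝ)+1) with hδdef
  have hδpos : 0 < δ := by positivity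
  set S : Set ℝ := {x | δ ≤ |U x - 1| ∧ δ ≤ |U x + 1|} with hSdef
  have hSmeas : MeasurableSet S := by
    apply MeasurableSet.inter
    · exact measurableSet_le measurable_const ((hUsm.measurable.sub measurable_const).abs)
    · exact measurableSet_le measurable_const ((hUsm.measurable.add measurable_const).abs)
  set m : ℝ≥0∞ := μ S with hmdef
  have hm : 0 < m := hk
  have hmtop : m ≠ ⊤ := by
    have h1 : m ≤ μ Set.univ := measure_mono (Set.subset_univ _)
    rw [hμdef, Measure.restrict_apply_univ] at h1
    exact (h1.trans_lt measure_Ioo_lt_top).ne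
  have hm2top : m/2 ≠ ⊤ := (ENNReal.div_lt_top hmtop (by norm_num)).ne
  have hm2pos : (0:ℝ≥0∞) < m/2 := ENNReal.half_pos hm.ne'
  -- convergence in measure
  have hTIM : TendstoInMeasure μ V atTop U := by
    refine tendstoInMeasure_of_tendsto_eLpNorm
      (ENNReal.ofReal_pos.2 (by linarith : (0:ℝ) < p)).ne'
      (fun n => (hVsm n).aestronglyMeasurable) hUsm.aestronglyMeasurable ?_
    refine hconv.congr fun n => ?_
    exact eLpNorm_congr_ae ((hVae n).sub hUae)
  have hev : ∀ᶠ n in atTop, μ {x | δ/2 ≤ dist (V n x) (U x)} < m/2 :=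
    ((hTIM (ENNReal.ofReal (δ/2)) (ENNReal.ofReal_pos.2 (half_pos hδpos))).eventually
      (Iio_mem_nhds hm2pos)).mono fun n hn => by
        refine lt_of_le_of_lt (measure_mono ?_) hn
        intro x hx
        simp only [Set.mem_setOf_eq, edist_dist] at hx ⊢
        exact ENNReal.ofReal_le_ofReal hx
  -- the key eventual lower bound
  have key : ∀ᶠ n in atTop, ENNReal.ofReal ((ε n)⁻¹) *
      (ENNReal.ofReal ((δ/2)^4) * (m/2)) ≤ Ffun a b p (ε n) (useq n) := by
    filter_upwards [hev] with n hn
    set T : Set ℝ := S ∩ {x | dist (V n x) (U x) < δ/2} with hTdef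
    have hTmeas : MeasurableSet T := hSmeas.inter
      (measurableSet_lt ((hVsm n).measurable.dist hUsm.measurable) measurable_const)
    have hμT : m/2 ≤ μ T := by
      have hsub : S ⊆ T ∪ {x | δ/2 ≤ dist (V n x) (U x)} := by
        intro x hx
        by_cases h : dist (V n x) (U x) < δ/2
        · exact Or.inl ⟨hx, h⟩
        · exact Or.inr (not_lt.1 h)
      have h2 : m ≤ μ T + m/2 :=
        ((measure_mono hsub).trans (measure_union_le _ _)).trans
          (add_le_add_right hn.le _)
      have h3 : m/2 + m/2 ≤ μ T + m/2 := by rw [ENNReal.add_halves]; exact h2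
      exact (ENNReal.add_le_add_iff_right hm2top).1 h3
    have hpt : ∀ x ∈ T, ENNReal.ofReal ((δ/2)^4) ≤
        ENNReal.ofReal (((V n x) ^ 2 - 1) ^ 2) := by
      rintro x ⟨⟨hx1, hx2⟩, hx3⟩
      apply ENNReal.ofReal_le_ofReal
      rw [Set.mem_setOf_eq, Real.dist_eq] at hx3
      have t1 : |U x - 1| - |V n x - 1| ≤ |V n x - U x| := by
        have := abs_sub_abs_le_abs_sub (U x - 1) (V n x - 1)
        have e : |U x - 1 - (V n x - 1)| = |V n x - U x| := by
          rw [abs_sub_comm]; ring_nf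
        linarith [e ▸ this]
      have t2 : |U x + 1| - |V n x + 1| ≤ |V n x - U x| := by
        have := abs_sub_abs_le_abs_sub (U x + 1) (V n x + 1)
        have e : |U x + 1 - (V n x + 1)| = |V n x - U x| := by
          rw [abs_sub_comm]; ring_nf
        linarith [e ▸ this]
      have h1 : δ/2 ≤ |V n x - 1| := by linarith
      have h2 : δ/2 ≤ |V n x + 1| := by linarith
      have q1 : (δ/2)^2 ≤ (V n x - 1)^2 := by
        rw [← sq_abs (V n x - 1)]; exact pow_le_pow_left₀ (by positivity) h1 2
      have q2 : (δ/2)^2 ≤ (V n x + 1)^2 := by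
        rw [← sq_abs (V n x + 1)]; exact pow_le_pow_left₀ (by positivity) h2 2
      nlinarith [mul_le_mul q1 q2 (by positivity) (sq_nonneg (V n x - 1))]
    apply le_sInf
    rintro r ⟨v, v', v'', hvae, hW, rfl⟩
    calc ENNReal.ofReal ((ε n)⁻¹) * (ENNReal.ofReal ((δ/2)^4) * (m/2))
        ≤ ENNReal.ofReal ((ε n)⁻¹) * (ENNReal.ofReal ((δ/2)^4) * μ T) := by
          gcongr
      _ = ENNReal.ofReal ((ε n)⁻¹) *
          ∫⁻ _ in T, ENNReal.ofReal ((δ/2)^4) ∂μ := by rw [setLIntegral_const]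
      _ ≤ ENNReal.ofReal ((ε n)⁻¹) *
          ∫⁻ x in T, ENNReal.ofReal (((V n x) ^ 2 - 1) ^ 2) ∂μ := by
          exact mul_le_mul_right (setLIntegral_mono' hTmeas hpt) _
      _ ≤ ENNReal.ofReal ((ε n)⁻¹) *
          ∫⁻ x, ENNReal.ofReal (((V n x) ^ 2 - 1) ^ 2) ∂μ := by
          exact mul_le_mul_right (setLIntegral_le_lintegral _ _) _
      _ = ENNReal.ofReal ((ε n)⁻¹) *
          ∫⁻ x, ENNReal.ofReal (((v x) ^ 2 - 1) ^ 2) ∂μ := by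
          congr 1
          apply lintegral_congr_ae
          filter_upwards [hvae, hVae n] with x h1 h2
          rw [h1, h2]
      _ = ∫⁻ x, ENNReal.ofReal ((ε n)⁻¹) *
            ENNReal.ofReal (((v x) ^ 2 - 1) ^ 2) ∂μ :=
          (lintegral_const_mul' _ _ ENNReal.ofReal_ne_top).symm
      _ = ∫⁻ x, ENNReal.ofReal ((ε n)⁻¹ * ((v x) ^ 2 - 1) ^ 2) ∂μ :=
          lintegral_congr fun x =>
            (ENNReal.ofReal_mul (inv_nonneg.2 (hεpos n).le)).symm
      _ ≤ ∫⁻ x, ENNReal.ofReal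
            ((ε n)⁻¹ * ((v x) ^ 2 - 1) ^ 2 + (ε n) ^ 3 * (v'' x) ^ 2) ∂μ :=
          lintegral_mono fun x => ENNReal.ofReal_le_ofReal
            (le_add_of_nonneg_right (mul_nonneg (pow_nonneg (hεpos n).le 3) (sq_nonneg _)))
  -- divergence
  have hinv : Tendsto (fun n => ENNReal.ofReal ((ε n)⁻¹)) atTop (𝓝 ⊤) := by
    refine ENNReal.tendsto_ofReal_atTop.comp (tendsto_inv_nhdsGT_zero.comp ?_)
    exact tendsto_nhdsWithin_iff.2
      ⟨hε0, Eventually.of_forall fun n => Set.mem_Ioi.2 (hεpos n)⟩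
  have hc₀ : ENNReal.ofReal ((δ/2)^4) * (m/2) ≠ 0 :=
    mul_ne_zero (ENNReal.ofReal_pos.2 (pow_pos (half_pos hδpos) 4)).ne' hm2pos.ne'
  have htop : Tendsto (fun n => ENNReal.ofReal ((ε n)⁻¹) *
      (ENNReal.ofReal ((δ/2)^4) * (m/2))) atTop (𝓝 ⊤) := by
    have h := ENNReal.Tendsto.mul_const (b := ENNReal.ofReal ((δ/2)^4) * (m/2)) hinv
      (Or.inl (by simp : (⊤:ℝ≥0∞) ≠ 0))
    rwa [ENNReal.top_mul hc₀] at h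
  exact tendsto_nhds_top_mono htop key


end
end

section
/- The function β : ℝ → ℝ defined by β(t) := (4/3^{3/4}) inf_{u ∈ 𝒥'(t)} Φ(u) satisfies β(t) ≥ 0 for all t, β(−1) = 0, β is monotone non-increasing on (−∞,−1], and β is monotone non-decreasing on [−1,∞). -/
open MeasureTheory Set Filter Topology
open scoped ENNReal NNReal

noncomputable section

/-- `β(t)` as a real number. -/
def betaR (p t : ℝ) : ℝ := (betaE p t).toReal

lemma map_scale (c : ℝ) (hc : 0 < c) :
    Measure.map (fun y => c * y) (volume.restrict (Ioo (0:ℝ) 1))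
      = (ENNReal.ofReal c⁻¹) • (volume.restrict (Ioo (0:ℝ) c)) := by
  have hne : c ≠ 0 := hc.ne'
  have hpre : (fun y => c * y) ⁻¹' (Ioo (0:ℝ) c) = Ioo (0:ℝ) 1 := by
    rw [preimage_const_mul_Ioo₀ _ _ hc]
    simp [div_self hne]
  rw [← hpre, ← Measure.restrict_map (measurable_const_mul c) measurableSet_Ioo,
    Real.map_volume_mul_left hne, abs_of_pos (inv_pos.mpr hc),
    Measure.restrict_smul]

lemma lintegral_scale (c : ℝ) (hc : 0 < c) (hc1 : c < 1) (f : ℝ → ℝ≥0∞) :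
    ∫⁻ y in Ioo (0:ℝ) 1, f (c * y) ≤
      ENNReal.ofReal c⁻¹ * ∫⁻ x in Ioo (0:ℝ) 1, f x := by
  have he : MeasurableEmbedding (fun y : ℝ => c * y) :=
    (Homeomorph.mulLeft₀ c hc.ne').measurableEmbedding
  calc ∫⁻ y in Ioo (0:ℝ) 1, f (c * y)
      = ∫⁻ x, f x ∂(Measure.map (fun y => c * y) (volume.restrict (Ioo (0:ℝ) 1))) :=
        (he.lintegral_map f).symm
    _ = ENNReal.ofReal c⁻¹ * ∫⁻ x in Ioo (0:ℝ) c, f x := by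
        rw [map_scale c hc, lintegral_smul_measure, smul_eq_mul]
    _ ≤ ENNReal.ofReal c⁻¹ * ∫⁻ x in Ioo (0:ℝ) 1, f x := by
        gcongr

lemma memLp_scale {q : ℝ≥0∞} {v : ℝ → ℝ} (c : ℝ) (hc : 0 < c) (hc1 : c < 1)
    (hv : MemLp v q (volume.restrict (Ioo (0:ℝ) 1))) :
    MemLp (fun y => v (c * y)) q (volume.restrict (Ioo (0:ℝ) 1)) := by
  have he : MeasurableEmbedding (fun y : ℝ => c * y) :=
    (Homeomorph.mulLeft₀ c hc.ne').measurableEmbedding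
  have : MemLp v q (Measure.map (fun y => c * y) (volume.restrict (Ioo (0:ℝ) 1))) := by
    rw [map_scale c hc]
    exact (hv.mono_measure (Measure.restrict_mono (Ioo_subset_Ioo le_rfl hc1.le)
      le_rfl)).smul_measure ENNReal.ofReal_ne_top
  exact he.memLp_map_measure_iff.mp this

lemma tendsto_scale_zero (c : ℝ) (hc : 0 < c) :
    Tendsto (fun y : ℝ => c * y) (𝓝[>] 0) (𝓝[>] 0) := by
  apply tendsto_nhdsWithin_of_tendsto_nhds_of_eventually_within
  · have := ((continuous_mul_left c)).tendsto (0:ℝ)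
    simpa using this.mono_left nhdsWithin_le_nhds
  · filter_upwards [self_mem_nhdsWithin] with y hy
    exact mul_pos hc hy

lemma rescale_mem {p s c : ℝ} {v v' v'' : ℝ → ℝ} (hc0 : 0 < c) (hc1 : c < 1)
    (hW : IsW2On (Ioo 0 1) (ENNReal.ofReal p) v v' v'')
    (h0 : Tendsto v (𝓝[>] 0) (𝓝 (-1))) (h0' : Tendsto v' (𝓝[>] 0) (𝓝 0))
    (hvc : v c = s) :
    ∃ r' ∈ JpVals p s, r' ≤ PhiE v v'' := by
  obtain ⟨hd, hftc, hm0, hm1, hm2⟩ := hW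
  set w : ℝ → ℝ := fun y => v (c * y) with hw
  set w' : ℝ → ℝ := fun y => c * v' (c * y) with hw'
  set w'' : ℝ → ℝ := fun y => c ^ 2 * v'' (c * y) with hw''
  have hmem : ∀ y ∈ Ioo (0:ℝ) 1, c * y ∈ Ioo (0:ℝ) 1 := by
    intro y hy
    exact ⟨mul_pos hc0 hy.1, lt_trans (by nlinarith [hy.1, hy.2] : c * y < c) hc1⟩
  refine ⟨PhiE w w'', ⟨w, w', w'', ⟨?_, ?_, ?_, ?_, ?_⟩, ?_, ?_, ?_, rfl⟩, ?_⟩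
  · -- HasDerivAt
    intro y hy
    have h1 : HasDerivAt (fun y : ℝ => c * y) c y := by
      simpa using (hasDerivAt_id y).const_mul c
    have := (hd (c * y) (hmem y hy)).comp y h1
    simpa [hw, hw', mul_comm, Function.comp_def] using this
  · -- FTC
    intro x hx y hy _
    have hsub : uIcc (c * x) (c * y) ⊆ Ioo (0:ℝ) 1 :=
      Set.ordConnected_Ioo.uIcc_subset (hmem x hx) (hmem y hy)
    have := hftc (c * x) (hmem x hx) (c * y) (hmem y hy) hsub
    have hint : (∫ t in x..y, w'' t) = c ^ 2 * (c⁻¹ • ∫ t in (c*x)..(c*y), v'' t) := by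
      rw [hw'']
      rw [intervalIntegral.integral_const_mul, intervalIntegral.integral_comp_mul_left _ hc0.ne']
    rw [hint, ← this]
    simp only [hw', smul_eq_mul]
    field_simp
  · exact memLp_scale c hc0 hc1 hm0
  · exact (memLp_scale c hc0 hc1 hm1).const_mul c
  · exact (memLp_scale c hc0 hc1 hm2).const_mul (c ^ 2)
  · -- w at 0+
    exact h0.comp (tendsto_scale_zero c hc0)
  · -- w at 1-
    have hcont : ContinuousAt v c := (hd c ⟨hc0, hc1⟩).continuousAt
    have h1 : Tendsto (fun y : ℝ => c * y) (𝓝[<] 1) (𝓝 c) := by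
      have := ((continuous_mul_left c)).tendsto (1:ℝ)
      simpa using this.mono_left nhdsWithin_le_nhds
    have := hcont.tendsto.comp h1
    rwa [hvc] at this
  · -- w' at 0+
    have := (h0'.comp (tendsto_scale_zero c hc0)).const_mul c
    simpa using this
  · -- PhiE inequality
    set C := ENNReal.ofReal c with hC
    have hCne0 : C ≠ 0 := by simp [hC, ENNReal.ofReal_pos.mpr hc0, (ENNReal.ofReal_pos.mpr hc0).ne']
    have hCnetop : C ≠ ⊤ := ENNReal.ofReal_ne_top
    set A := ∫⁻ y in Ioo (0:ℝ) 1, ENNReal.ofReal (((v y) ^ 2 - 1) ^ 2) with hA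
    set B := ∫⁻ y in Ioo (0:ℝ) 1, ENNReal.ofReal ((v'' y) ^ 2) with hB
    have hAw : (∫⁻ y in Ioo (0:ℝ) 1, ENNReal.ofReal (((w y) ^ 2 - 1) ^ 2)) ≤ C⁻¹ * A := by
      rw [← ENNReal.ofReal_inv_of_pos hc0]
      exact lintegral_scale c hc0 hc1 (fun x => ENNReal.ofReal (((v x) ^ 2 - 1) ^ 2))
    have hBw : (∫⁻ y in Ioo (0:ℝ) 1, ENNReal.ofReal ((w'' y) ^ 2)) ≤ C ^ 3 * B := by
      have heq : ∀ y : ℝ, ENNReal.ofReal ((w'' y) ^ 2)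
          = ENNReal.ofReal (c ^ 4) * ENNReal.ofReal ((v'' (c * y)) ^ 2) := by
        intro y
        rw [← ENNReal.ofReal_mul (by positivity)]
        congr 1
        rw [hw'']; ring
      calc (∫⁻ y in Ioo (0:ℝ) 1, ENNReal.ofReal ((w'' y) ^ 2))
          = ENNReal.ofReal (c ^ 4) * ∫⁻ y in Ioo (0:ℝ) 1, ENNReal.ofReal ((v'' (c * y)) ^ 2) := by
            simp_rw [heq]
            rw [lintegral_const_mul' _ _ ENNReal.ofReal_ne_top]
        _ ≤ ENNReal.ofReal (c ^ 4) * (ENNReal.ofReal c⁻¹ * B) := by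
            gcongr
            exact lintegral_scale c hc0 hc1 (fun x => ENNReal.ofReal ((v'' x) ^ 2))
        _ = C ^ 3 * B := by
            rw [← mul_assoc, ← ENNReal.ofReal_mul (by positivity), ← ENNReal.ofReal_pow hc0.le]
            congr 2
            field_simp
    calc PhiE w w'' ≤ (C⁻¹ * A) ^ ((3:ℝ)/4) * ((C ^ 3) * B) ^ ((1:ℝ)/4) := by
          unfold PhiE
          gcongr <;> norm_num
      _ = (C⁻¹ ^ ((3:ℝ)/4) * (C ^ 3) ^ ((1:ℝ)/4)) * (A ^ ((3:ℝ)/4) * B ^ ((1:ℝ)/4)) := by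
          rw [ENNReal.mul_rpow_of_nonneg _ _ (by norm_num : (0:ℝ) ≤ 3/4),
            ENNReal.mul_rpow_of_nonneg _ _ (by norm_num : (0:ℝ) ≤ 1/4)]
          ring
      _ = PhiE v v'' := by
          have hne0 : C ^ ((3:ℝ)/4) ≠ 0 := by
            simp [ENNReal.rpow_eq_zero_iff, hCne0, hCnetop]
          have hnetop : C ^ ((3:ℝ)/4) ≠ ⊤ := ENNReal.rpow_ne_top_of_nonneg (by norm_num) hCnetop
          have h1 : C⁻¹ ^ ((3:ℝ)/4) * (C ^ 3) ^ ((1:ℝ)/4) = 1 := by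
            rw [ENNReal.inv_rpow, ← ENNReal.rpow_natCast C 3, ← ENNReal.rpow_mul]
            norm_num
            exact ENNReal.inv_mul_cancel hne0 hnetop
          rw [h1, one_mul]
          rfl

-- constant -1 witness
lemma zero_mem_Jp (p : ℝ) : (0 : ℝ≥0∞) ∈ JpVals p (-1) := by
  refine ⟨fun _ => -1, fun _ => 0, fun _ => 0, ⟨?_, ?_, ?_, ?_, ?_⟩, ?_, ?_, ?_, ?_⟩
  · exact fun x _ => hasDerivAt_const x (-1)
  · intro x _ y _ _; simp
  · exact memLp_const _
  · exact memLp_const _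
  · exact memLp_const _
  · exact tendsto_const_nhds
  · exact tendsto_const_nhds
  · exact tendsto_const_nhds
  · unfold PhiE
    have h1 : ((-1:ℝ) ^ 2 - 1) ^ 2 = 0 := by norm_num
    simp only [h1, ENNReal.ofReal_zero, lintegral_zero]
    rw [ENNReal.zero_rpow_of_pos (by norm_num), zero_mul]

-- polynomial witness with finite PhiE
lemma finite_mem_Jp (p t : ℝ) : ∃ r ∈ JpVals p t, r ≠ ⊤ := by
  set M : ℝ := |t + 1| + 1 with hM
  set v : ℝ → ℝ := fun x => (t + 1) * x ^ 2 - 1 with hv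
  set v' : ℝ → ℝ := fun x => (t + 1) * (2 * x) with hv'
  set v'' : ℝ → ℝ := fun _ => 2 * (t + 1) with hv''
  have hcv : Continuous v := by fun_prop
  have hcv' : Continuous v' := by fun_prop
  have hbound : ∀ x ∈ Ioo (0:ℝ) 1, |v x| ≤ M := by
    intro x hx
    have hx2 : x ^ 2 ≤ 1 := by nlinarith [hx.1, hx.2]
    have h2 : |(t+1) * x ^ 2| ≤ |t+1| := by
      rw [abs_mul, abs_of_nonneg (by positivity : (0:ℝ) ≤ x ^ 2)]
      nlinarith [abs_nonneg (t+1), sq_nonneg x]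
    have h3' := abs_sub ((t+1) * x ^ 2) 1
    rw [abs_one] at h3'
    have h3 : |v x| ≤ |(t+1) * x ^ 2| + 1 := by simpa [hv] using h3' 
    rw [hM]
    linarith
  refine ⟨PhiE v v'', ⟨v, v', v'', ⟨?_, ?_, ?_, ?_, ?_⟩, ?_, ?_, ?_, rfl⟩, ?_⟩
  · intro x _
    have h : HasDerivAt (fun x : ℝ => x ^ 2) (2 * x ^ 1) x := by
      simpa using hasDerivAt_pow 2 x
    simpa [hv, hv', mul_comm, pow_one] using (h.const_mul (t+1)).sub_const 1
  · intro x _ y _ _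
    rw [hv'', intervalIntegral.integral_const, smul_eq_mul, hv']
    ring
  · refine MemLp.of_bound hcv.aestronglyMeasurable M ?_
    refine (ae_restrict_iff' measurableSet_Ioo).mpr (ae_of_all _ ?_)
    intro x hx
    simpa [Real.norm_eq_abs] using hbound x hx
  · refine MemLp.of_bound hcv'.aestronglyMeasurable (2 * M) ?_
    refine (ae_restrict_iff' measurableSet_Ioo).mpr (ae_of_all _ ?_)
    intro x hx
    rw [Real.norm_eq_abs, hv', hM]
    have : |(t+1) * (2*x)| = |t+1| * (2*x) := by
      rw [abs_mul, abs_of_nonneg (by linarith [hx.1] : (0:ℝ) ≤ 2*x)]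
    rw [this]
    nlinarith [abs_nonneg (t+1), hx.1, hx.2]
  · exact memLp_const _
  · have := (hcv.tendsto 0).mono_left (nhdsWithin_le_nhds (s := Ioi (0:ℝ)))
    simpa [hv] using this
  · have := (hcv.tendsto 1).mono_left (nhdsWithin_le_nhds (s := Iio (1:ℝ)))
    have hv1 : v 1 = t := by simp [hv]
    rwa [hv1] at this
  · have := (hcv'.tendsto 0).mono_left (nhdsWithin_le_nhds (s := Ioi (0:ℝ)))
    simpa [hv'] using this
  · -- finiteness of PhiE
    have hA : (∫⁻ y in Ioo (0:ℝ) 1, ENNReal.ofReal (((v y) ^ 2 - 1) ^ 2)) ≠ ⊤ := by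
      refine ne_top_of_le_ne_top (b := ENNReal.ofReal ((M^2+1)^2) * volume (Ioo (0:ℝ) 1)) ?_ ?_
      · exact ENNReal.mul_ne_top ENNReal.ofReal_ne_top (by simp)
      · rw [← setLIntegral_const]
        refine setLIntegral_mono' measurableSet_Ioo ?_
        intro x hx
        apply ENNReal.ofReal_le_ofReal
        have h1 : |v x| ≤ M := hbound x hx
        have hM0 : 0 ≤ M := le_trans (abs_nonneg _) h1
        have h2 : (v x) ^ 2 ≤ M ^ 2 := sq_le_sq' (by linarith [abs_le.mp h1]) (abs_le.mp h1).2
        nlinarith [sq_nonneg (v x), sq_nonneg ((v x)^2 - 1)]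
    have hB : (∫⁻ y in Ioo (0:ℝ) 1, ENNReal.ofReal ((v'' y) ^ 2)) ≠ ⊤ := by
      refine ne_top_of_le_ne_top (b := ENNReal.ofReal ((2*(t+1))^2) * volume (Ioo (0:ℝ) 1)) ?_ ?_
      · exact ENNReal.mul_ne_top ENNReal.ofReal_ne_top (by simp)
      · rw [← setLIntegral_const]
    unfold PhiE
    exact ENNReal.mul_ne_top
      (ENNReal.rpow_ne_top_of_nonneg (by norm_num) hA)
      (ENNReal.rpow_ne_top_of_nonneg (by norm_num) hB)

lemma exists_ivt_point {t s : ℝ} {v : ℝ → ℝ} (hcont : ContinuousOn v (Ioo 0 1))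
    (h0 : Tendsto v (𝓝[>] (0:ℝ)) (𝓝 (-1))) (h1 : Tendsto v (𝓝[<] (1:ℝ)) (𝓝 t))
    (hs : s ∈ uIcc (-1) t) (hs1 : s ≠ -1) (hst : s ≠ t) :
    ∃ c ∈ Ioo (0:ℝ) 1, v c = s := by
  have hε₁ : (0:ℝ) < |s + 1| := by
    rw [abs_pos]; intro h; apply hs1; linarith
  have hε₂ : (0:ℝ) < |s - t| := by
    rw [abs_pos]; intro h; apply hst; linarith
  have hIoo0 : Ioo (0:ℝ) 1 ∈ 𝓝[>] (0:ℝ) :=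
    Ioo_mem_nhdsGT_of_mem ⟨le_refl 0, zero_lt_one⟩
  have hIoo1 : Ioo (0:ℝ) 1 ∈ 𝓝[<] (1:ℝ) :=
    Ioo_mem_nhdsLT_of_mem ⟨zero_lt_one, le_refl 1⟩
  obtain ⟨a, haIoo, hav⟩ := (((Filter.eventually_of_mem hIoo0 (fun y hy => hy) : ∀ᶠ y in 𝓝[>] (0:ℝ), y ∈ Ioo (0:ℝ) 1)).and
    ((Metric.tendsto_nhds.mp h0) _ hε₁)).exists
  obtain ⟨b, hbIoo, hbv⟩ := (((Filter.eventually_of_mem hIoo1 (fun y hy => hy) : ∀ᶠ y in 𝓝[<] (1:ℝ), y ∈ Ioo (0:ℝ) 1)).and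
    ((Metric.tendsto_nhds.mp h1) _ hε₂)).exists
  rw [Real.dist_eq] at hav hbv
  have hsub : uIcc a b ⊆ Ioo (0:ℝ) 1 := Set.ordConnected_Ioo.uIcc_subset haIoo hbIoo
  have hmem : s ∈ uIcc (v a) (v b) := by
    rcases lt_or_ge (-1 : ℝ) t with hlt | hle
    · -- -1 < t, so -1 ≤ s ≤ t, and s ≠ -1, s ≠ t give -1 < s < t
      have hsI : s ∈ Icc (-1:ℝ) t := by rwa [uIcc_of_le hlt.le] at hs
      have hs1' : -1 < s := lt_of_le_of_ne hsI.1 (Ne.symm hs1)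
      have hst' : s < t := lt_of_le_of_ne hsI.2 hst
      have h1' : |s + 1| = s + 1 := abs_of_pos (by linarith)
      have h2' : |s - t| = -(s - t) := abs_of_neg (by linarith)
      have hva : v a < s := by
        have := le_abs_self (v a - (-1)); rw [h1'] at hav; linarith
      have hvb : s < v b := by
        have := neg_abs_le (v b - t); rw [h2'] at hbv; linarith
      exact mem_uIcc.mpr (Or.inl ⟨hva.le, hvb.le⟩)
    · -- t ≤ -1; t = -1 would force s = -1
      have hlt : t < -1 := lt_of_le_of_ne hle (by
        intro h; subst h; simp at hs; exact hs1 hs)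
      have hsI : s ∈ Icc t (-1:ℝ) := by rwa [uIcc_comm, uIcc_of_le hlt.le] at hs
      have hs1' : s < -1 := lt_of_le_of_ne hsI.2 hs1
      have hst' : t < s := lt_of_le_of_ne hsI.1 (Ne.symm hst)
      have h1' : |s + 1| = -(s + 1) := abs_of_neg (by linarith)
      have h2' : |s - t| = s - t := abs_of_pos (by linarith)
      have hva : s < v a := by
        have := neg_abs_le (v a - (-1)); rw [h1'] at hav; linarith
      have hvb : v b < s := by
        have := le_abs_self (v b - t); rw [h2'] at hbv; linarith
      exact mem_uIcc.mpr (Or.inr ⟨hvb.le, hva.le⟩)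
  obtain ⟨c, hc, hvc⟩ := intermediate_value_uIcc (hcont.mono hsub) hmem
  exact ⟨c, hsub hc, hvc⟩

lemma sInf_Jp_mono (p s t : ℝ) (hs : s ∈ uIcc (-1) t) :
    sInf (JpVals p s) ≤ sInf (JpVals p t) := by
  by_cases hs1 : s = -1
  · subst hs1
    exact le_trans (sInf_le (zero_mem_Jp p)) zero_le
  by_cases hst : s = t
  · subst hst; exact le_refl _
  apply sInf_le_sInf_of_isCoinitialFor
  rintro r ⟨v, v', v'', hW, h0, h1, h0', rfl⟩
  have hcont : ContinuousOn v (Ioo 0 1) := fun x hx =>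
    (hW.1 x hx).continuousAt.continuousWithinAt
  obtain ⟨c, hc, hvc⟩ := exists_ivt_point hcont h0 h1 hs hs1 hst
  exact rescale_mem hc.1 hc.2 hW h0 h0' hvc

/-- Monotonicity properties of `β`.  `β ≥ 0`, `β(-1) = 0`,
`β` is non-increasing on `(-∞,-1]` and non-decreasing on `[-1,∞)`. -/
theorem statement_14 (p : ℝ) (hp1 : 1 ≤ p) :
    (∀ t : ℝ, 0 ≤ betaR p t) ∧ betaR p (-1) = 0 ∧
    AntitoneOn (betaR p) (Set.Iic (-1)) ∧ MonotoneOn (betaR p) (Set.Ici (-1)) := by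
  have hfin : ∀ t, betaE p t ≠ ⊤ := by
    intro t
    obtain ⟨r, hr, hrt⟩ := finite_mem_Jp p t
    exact ENNReal.mul_ne_top ENNReal.ofReal_ne_top (ne_top_of_le_ne_top hrt (sInf_le hr))
  have hmonoE : ∀ s t : ℝ, s ∈ uIcc (-1) t → betaE p s ≤ betaE p t := fun s t h =>
    mul_le_mul_right (sInf_Jp_mono p s t h) _
  refine ⟨fun t => ENNReal.toReal_nonneg, ?_, ?_, ?_⟩
  · have h0 : sInf (JpVals p (-1)) = 0 :=
      le_antisymm (sInf_le (zero_mem_Jp p)) zero_le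
    rw [betaR, betaE, h0, mul_zero, ENNReal.toReal_zero]
  · intro a ha b hb hab
    refine ENNReal.toReal_mono (hfin a) (hmonoE b a ?_)
    exact mem_uIcc.mpr (Or.inr ⟨hab, hb⟩)
  · intro a ha b hb hab
    refine ENNReal.toReal_mono (hfin b) (hmonoE a b ?_)
    exact mem_uIcc.mpr (Or.inl ⟨ha, hab⟩)

end
end

section
/- Let u ∈ W^{2,∞}(−∞,0) (identified with its C¹ representative) be such that Ψ(u) := ∫_{−∞}^0 (u²−1)² + |u''|² dx < ∞. Then the limit lim_{x→−∞} u(x) exists and belongs to {−1, 1}. -/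
open MeasureTheory Set Filter Topology
open scoped ENNReal NNReal

noncomputable section

/-- a.e. bound + continuity on `Iio 0` gives pointwise bound. -/
lemma ae_bound_pointwise {f : ℝ → ℝ} {C : ℝ}
    (hf : ContinuousOn f (Set.Iio 0))
    (h : ∀ᵐ x ∂(volume.restrict (Set.Iio 0)), |f x| ≤ C) :
    ∀ x ∈ Set.Iio (0:ℝ), |f x| ≤ C := by
  intro x hx
  by_contra hlt
  push_neg at hlt
  have hcont : ContinuousAt f x := by
    have := hf x hx
    rwa [ContinuousWithinAt, isOpen_Iio.nhdsWithin_eq hx] at this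
  have hnb : ∀ᶠ y in 𝓝 x, C < |f y| :=
    (hcont.abs.tendsto).eventually (eventually_gt_nhds hlt)
  rcases Metric.mem_nhds_iff.1 hnb with ⟨r, hr, hball⟩
  set δ := min r (-x) with hδdef
  have hδ : 0 < δ := lt_min hr (by linarith [hx.out])
  have hsub : Set.Ioo (x - δ) x ⊆ {y : ℝ | ¬ |f y| ≤ C} := by
    intro y hy
    have : y ∈ Metric.ball x r := by
      rw [Metric.mem_ball, Real.dist_eq, abs_of_neg (by linarith [hy.2] : y - x < 0)]
      have := hy.1
      have : x - y < δ := by linarith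
      linarith [min_le_left r (-x)]
    exact not_le.2 (hball this)
  have h0 : (volume.restrict (Set.Iio (0:ℝ))) {y : ℝ | ¬ |f y| ≤ C} = 0 := by
    rw [ae_iff] at h; exact h
  have hle : (volume.restrict (Set.Iio (0:ℝ))) (Set.Ioo (x - δ) x) = 0 :=
    le_antisymm (h0 ▸ measure_mono hsub) zero_le
  rw [Measure.restrict_apply measurableSet_Ioo] at hle
  have hsub2 : Set.Ioo (x - δ) x ∩ Set.Iio 0 = Set.Ioo (x - δ) x := by
    apply Set.inter_eq_self_of_subset_left
    intro y hy; exact lt_trans hy.2 hx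
  rw [hsub2, Real.volume_Ioo] at hle
  have : (0:ℝ) < x - (x - δ) := by linarith
  simp [ENNReal.ofReal_eq_zero] at hle
  linarith


lemma Iio_eq_iUnion_Ico (a : ℝ) :
    Set.Iio a = ⋃ k : ℕ, Set.Ico (a - (k + 1)) (a - k) := by
  ext y
  simp only [Set.mem_Iio, Set.mem_iUnion, Set.mem_Ico]
  constructor
  · intro hy
    set t := a - y with ht
    have h0 : 0 < t := by linarith
    have h1 : 1 ≤ ⌈t⌉₊ := Nat.one_le_ceil_iff.2 h0
    refine ⟨⌈t⌉₊ - 1, ?_, ?_⟩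
    · have : t ≤ ⌈t⌉₊ := Nat.le_ceil t
      have hc : ((⌈t⌉₊ - 1 : ℕ) : ℝ) + 1 = (⌈t⌉₊ : ℝ) := by
        push_cast [Nat.cast_sub h1]; ring
      linarith [hc ▸ this]
    · by_contra hcon
      push_neg at hcon
      have : t ≤ ((⌈t⌉₊ - 1 : ℕ) : ℝ) := by linarith
      have := Nat.ceil_le.2 this
      omega
  · rintro ⟨k, _, h2⟩
    have : (0:ℝ) ≤ k := Nat.cast_nonneg k
    linarith

lemma pairwise_disjoint_Ico (a : ℝ) :
    Pairwise (Function.onFun Disjoint fun k : ℕ => Set.Ico (a - (k + 1)) (a - k)) := by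
  intro i j hij
  simp only [Function.onFun, Set.Ico_disjoint_Ico]
  rcases lt_or_gt_of_ne hij with h | h
  · have : (i:ℝ) + 1 ≤ j := by exact_mod_cast h
    exact min_le_of_right_le (le_max_of_le_left (by linarith))
  · have : (j:ℝ) + 1 ≤ i := by exact_mod_cast h
    exact min_le_of_left_le (le_max_of_le_right (by linarith))

lemma lintegral_Iio_eq_tsum (g : ℝ → ℝ≥0∞) (a : ℝ) :
    ∫⁻ x in Set.Iio a, g x = ∑' k : ℕ, ∫⁻ x in Set.Ico (a - (k+1)) (a - k), g x := by
  rw [Iio_eq_iUnion_Ico a,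
    Measure.restrict_iUnion (pairwise_disjoint_Ico a) (fun k => measurableSet_Ico),
    lintegral_sum_measure]

/-- tail integrals tend to zero -/
lemma tail_tendsto_zero (g : ℝ → ℝ≥0∞)
    (hfin : ∫⁻ x in Set.Iio (0:ℝ), g x ≠ ⊤) :
    Tendsto (fun n : ℕ => ∫⁻ x in Set.Iio (-(n:ℝ)), g x) atTop (𝓝 0) := by
  set G : ℕ → ℝ≥0∞ := fun k => ∫⁻ x in Set.Ico (0 - ((k:ℝ)+1)) (0 - (k:ℝ)), g x with hG
  have h0 : ∑' k, G k ≠ ⊤ := by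
    rw [← lintegral_Iio_eq_tsum g 0]; exact hfin
  have key : ∀ n : ℕ, ∫⁻ x in Set.Iio (-(n:ℝ)), g x = ∑' k, G (k + n) := by
    intro n
    rw [lintegral_Iio_eq_tsum g (-(n:ℝ))]
    refine tsum_congr fun k => ?_
    have e1 : -(n:ℝ) - ((k:ℝ)+1) = 0 - (((k+n:ℕ):ℝ)+1) := by push_cast; ring
    have e2 : -(n:ℝ) - (k:ℝ) = 0 - ((k+n:ℕ):ℝ) := by push_cast; ring
    rw [e1, e2]
  simp only [key]
  exact ENNReal.tendsto_sum_nat_add G h0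

/-- Nonnegative Lipschitz (on `Iio 0`) function with finite integral tends to 0 at `-∞`. -/
lemma decay {f : ℝ → ℝ} {K : ℝ} (hK : 0 < K)
    (hf0 : ∀ x < (0:ℝ), 0 ≤ f x)
    (hlip : ∀ x < (0:ℝ), ∀ y < (0:ℝ), |f x - f y| ≤ K * |x - y|)
    (hint : ∫⁻ x in Set.Iio (0:ℝ), ENNReal.ofReal (f x) ≠ ⊤) :
    Tendsto f atBot (𝓝 0) := by
  have htail := tail_tendsto_zero (fun x => ENNReal.ofReal (f x)) hint
  rw [Metric.tendsto_nhds]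
  intro ε hε
  rw [eventually_atBot]
  set δ : ℝ := min (ε / (2 * K)) 1 with hδdef
  have hδ : 0 < δ := lt_min (by positivity) one_pos
  set c : ℝ≥0∞ := ENNReal.ofReal (ε / 2) * ENNReal.ofReal δ with hc
  have hcpos : 0 < c := by
    apply ENNReal.mul_pos <;> simp [ENNReal.ofReal_pos] <;> positivity
  obtain ⟨n, hn⟩ : ∃ n : ℕ, ∫⁻ x in Set.Iio (-(n:ℝ)), ENNReal.ofReal (f x) < c :=
    (htail.eventually (gt_mem_nhds hcpos)).exists
  refine ⟨-(n:ℝ) - 1, fun x hx => ?_⟩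
  have hx0 : x < 0 := by linarith [Nat.cast_nonneg (α := ℝ) n]
  rw [Real.dist_eq, sub_zero, abs_of_nonneg (hf0 x hx0)]
  by_contra hcon
  push_neg at hcon
  have hKδ : K * δ ≤ ε / 2 := by
    have h5 : δ ≤ ε / (2*K) := min_le_left _ _
    calc K * δ ≤ K * (ε/(2*K)) := by nlinarith
    _ = ε/2 := by field_simp
  have hlb : ∀ y ∈ Set.Ioo (x - δ) x, ε/2 ≤ f y := by
    intro y hy
    have hy0 : y < 0 := lt_trans hy.2 hx0
    have h6 := hlip x hx0 y hy0
    have habs : |x - y| ≤ δ := by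
      rw [abs_of_nonneg (by linarith [hy.2] : (0:ℝ) ≤ x - y)]; linarith [hy.1]
    have h7 : f x - f y ≤ K * δ :=
      calc f x - f y ≤ |f x - f y| := le_abs_self _
      _ ≤ K * |x - y| := h6
      _ ≤ K * δ := by nlinarith
    linarith
  have hsub : Set.Ioo (x - δ) x ⊆ Set.Iio (-(n:ℝ)) := by
    intro y hy; have := hy.2; simp only [Set.mem_Iio]; linarith
  have h1 : c ≤ ∫⁻ y in Set.Ioo (x - δ) x, ENNReal.ofReal (f y) := by
    have h2 : ∫⁻ y in Set.Ioo (x-δ) x, ENNReal.ofReal (ε/2)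
        ≤ ∫⁻ y in Set.Ioo (x-δ) x, ENNReal.ofReal (f y) := by
      apply lintegral_mono_ae
      filter_upwards [ae_restrict_mem measurableSet_Ioo] with y hy
      exact ENNReal.ofReal_le_ofReal (hlb y hy)
    calc c = ENNReal.ofReal (ε/2) * volume (Set.Ioo (x-δ) x) := by
            rw [Real.volume_Ioo, hc, show x - (x - δ) = δ by ring]
      _ = ∫⁻ _y in Set.Ioo (x-δ) x, ENNReal.ofReal (ε/2) := (setLIntegral_const _ _).symm
      _ ≤ _ := h2
  have h3 : c ≤ ∫⁻ y in Set.Iio (-(n:ℝ)), ENNReal.ofReal (f y) :=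
    h1.trans (lintegral_mono_set hsub)
  exact absurd (lt_of_le_of_lt h3 hn) (lt_irrefl c)


lemma memTop_ae_bound {f : ℝ → ℝ} (hf : MeasureTheory.MemLp f ⊤ (volume.restrict (Set.Iio (0:ℝ)))) :
    ∃ C : ℝ, 0 ≤ C ∧ ∀ᵐ x ∂(volume.restrict (Set.Iio (0:ℝ))), |f x| ≤ C := by
  refine ⟨(eLpNormEssSup f (volume.restrict (Set.Iio (0:ℝ)))).toReal, ENNReal.toReal_nonneg, ?_⟩
  have hE : eLpNormEssSup f (volume.restrict (Set.Iio (0:ℝ))) ≠ ⊤ := by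
    have := hf.2
    rwa [eLpNorm_exponent_top, lt_top_iff_ne_top] at this
  filter_upwards [ae_le_eLpNormEssSup (f := f) (μ := volume.restrict (Set.Iio (0:ℝ)))] with x hx
  have := ENNReal.toReal_mono hE hx
  simpa [Real.norm_eq_abs] using this

/-- Limits at `-∞`.  If `u ∈ W^{2,∞}(-∞,0)` and
`Ψ(u) < ∞`, then `lim_{x → -∞} u(x)` exists and lies in `{-1, 1}`. -/

theorem statement_16 (u u' u'' : ℝ → ℝ)
    (hu : IsW2On (Set.Iio 0) ⊤ u u' u'')
    (hΨ : PsiE u u'' ≠ ⊤) :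
    ∃ l : ℝ, (l = -1 ∨ l = 1) ∧ Tendsto u atBot (𝓝 l) := by
  obtain ⟨hderiv, hFTC, huL, hu'L, hu''L⟩ := hu
  have hcontu : ContinuousOn u (Set.Iio 0) := fun x hx =>
    (hderiv x hx).continuousAt.continuousWithinAt
  obtain ⟨M0, hM0nn, hM0ae⟩ := memTop_ae_bound huL
  obtain ⟨M1, hM1nn, hM1ae⟩ := memTop_ae_bound hu'L
  obtain ⟨M2, hM2nn, hM2ae⟩ := memTop_ae_bound hu''L
  have hM0 : ∀ x ∈ Set.Iio (0:ℝ), |u x| ≤ M0 := ae_bound_pointwise hcontu hM0ae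
  -- u' is Lipschitz on Iio 0
  have hu'lip : ∀ x ∈ Set.Iio (0:ℝ), ∀ y ∈ Set.Iio (0:ℝ), |u' y - u' x| ≤ M2 * |y - x| := by
    intro x hx y hy
    have hsub : Set.uIcc x y ⊆ Set.Iio 0 := by
      intro t ht
      rw [Set.mem_uIcc] at ht
      rcases ht with ⟨_, h2⟩ | ⟨_, h2⟩ <;> simp only [Set.mem_Iio] <;>
        [exact lt_of_le_of_lt h2 hy; exact lt_of_le_of_lt h2 hx]
    have heq := hFTC x hx y hy hsub
    rw [heq]
    have hae : ∀ᵐ t ∂(volume : Measure ℝ), t ∈ Set.uIoc x y → ‖u'' t‖ ≤ M2 := by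
      have := (ae_restrict_iff' measurableSet_Iio).1 hM2ae
      filter_upwards [this] with t ht hmem
      have ht0 : t ∈ Set.Iio (0:ℝ) := by
        rw [Set.mem_uIoc] at hmem
        rcases hmem with ⟨_, h2⟩ | ⟨_, h2⟩ <;> simp only [Set.mem_Iio] <;>
          [exact lt_of_le_of_lt h2 hy; exact lt_of_le_of_lt h2 hx]
      simpa [Real.norm_eq_abs] using ht ht0
    have := intervalIntegral.norm_integral_le_of_norm_le_const_ae hae
    simpa [Real.norm_eq_abs, abs_sub_comm] using this
  have hcontu' : ContinuousOn u' (Set.Iio 0) := by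
    have : LipschitzOnWith (Real.toNNReal M2) u' (Set.Iio 0) := by
      apply LipschitzOnWith.of_dist_le_mul
      intro x hx y hy
      rw [Real.dist_eq, Real.dist_eq, Real.coe_toNNReal _ hM2nn]
      simpa [abs_sub_comm] using hu'lip y hy x hx
    exact this.continuousOn
  have hM1 : ∀ x ∈ Set.Iio (0:ℝ), |u' x| ≤ M1 := ae_bound_pointwise hcontu' hM1ae
  -- u is Lipschitz on Iio 0
  have hulip : ∀ x ∈ Set.Iio (0:ℝ), ∀ y ∈ Set.Iio (0:ℝ), |u y - u x| ≤ M1 * |y - x| := by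
    intro x hx y hy
    have := (convex_Iio (0:ℝ)).norm_image_sub_le_of_norm_hasDerivWithin_le
      (fun z hz => (hderiv z hz).hasDerivWithinAt)
      (fun z hz => by simpa [Real.norm_eq_abs] using hM1 z hz) hx hy
    simpa [Real.norm_eq_abs] using this
  -- the function f = (u²-1)²
  set f : ℝ → ℝ := fun x => (u x ^ 2 - 1) ^ 2 with hfdef
  set K : ℝ := ((2 * M0 ^ 2 + 2) * (2 * M0)) * M1 + 1 with hKdef
  have hK : 0 < K := by positivity
  have hflip : ∀ x < (0:ℝ), ∀ y < (0:ℝ), |f x - f y| ≤ K * |x - y| := by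
    intro x hx y hy
    have ha := abs_le.1 (hM0 x hx)
    have hb := abs_le.1 (hM0 y hy)
    have hab : |u x - u y| ≤ M1 * |x - y| := by
      simpa [abs_sub_comm] using hulip y hy x hx
    have key : f x - f y =
        ((u x ^ 2 + u y ^ 2 - 2) * (u x + u y)) * (u x - u y) := by
      simp only [hfdef]; ring
    have h81 : |u x ^ 2 + u y ^ 2 - 2| ≤ 2 * M0 ^ 2 + 2 :=
      abs_le.2 ⟨by nlinarith, by nlinarith⟩
    have h82 : |u x + u y| ≤ 2 * M0 := abs_le.2 ⟨by linarith, by linarith⟩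
    calc |f x - f y| = |u x ^ 2 + u y ^ 2 - 2| * |u x + u y| * |u x - u y| := by
          rw [key, abs_mul, abs_mul]
      _ ≤ (2 * M0 ^ 2 + 2) * (2 * M0) * (M1 * |x - y|) := by
          apply mul_le_mul _ hab (abs_nonneg _) (by positivity)
          exact mul_le_mul h81 h82 (abs_nonneg _) (by positivity)
      _ ≤ K * |x - y| := by nlinarith [abs_nonneg (x - y)]
  have hf0 : ∀ x < (0:ℝ), 0 ≤ f x := fun x _ => by positivity
  have hint : ∫⁻ x in Set.Iio (0:ℝ), ENNReal.ofReal (f x) ≠ ⊤ := by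
    rw [PsiE] at hΨ
    refine ne_top_of_le_ne_top hΨ (lintegral_mono fun x => ?_)
    exact ENNReal.ofReal_le_ofReal (by simp only [hfdef]; nlinarith [sq_nonneg (u'' x)])
  have hftend : Tendsto f atBot (𝓝 0) := decay hK hf0 hflip hint
  -- |u² - 1| → 0
  have habs2 : Tendsto (fun x => |u x ^ 2 - 1|) atBot (𝓝 0) := by
    have h := (Real.continuous_sqrt.tendsto 0).comp hftend
    rw [Real.sqrt_zero] at h
    refine h.congr fun x => ?_
    simp only [Function.comp, hfdef, Real.sqrt_sq_eq_abs]
  have hsq : Tendsto (fun x => u x ^ 2 - 1) atBot (𝓝 0) := by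
    have hneg : Tendsto (fun x => -|u x ^ 2 - 1|) atBot (𝓝 0) := by
      simpa using habs2.neg
    exact tendsto_of_tendsto_of_tendsto_of_le_of_le hneg habs2
      (fun x => neg_abs_le _) (fun x => le_abs_self _)
  have hsq1 : Tendsto (fun x => u x ^ 2) atBot (𝓝 1) := by
    have := hsq.add_const 1
    simpa using this
  have habsu : Tendsto (fun x => |u x|) atBot (𝓝 1) := by
    have h := (Real.continuous_sqrt.tendsto 1).comp hsq1
    rw [Real.sqrt_one] at h
    refine h.congr fun x => ?_
    simp only [Function.comp, Real.sqrt_sq_eq_abs]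
  have hev : ∀ᶠ x in (atBot : Filter ℝ), 1/2 < |u x| :=
    habsu.eventually (eventually_gt_nhds (by norm_num))
  have hev2 : ∀ᶠ x in (atBot : Filter ℝ), x < 0 := eventually_lt_atBot 0
  rcases eventually_atBot.1 (hev.and hev2) with ⟨T, hT⟩
  have hTm : (1:ℝ)/2 < |u T| ∧ T < 0 := hT T le_rfl
  have hIcc : ∀ x ≤ T, Set.Icc x T ⊆ Set.Iio (0:ℝ) := fun x hx y hy =>
    lt_of_le_of_lt hy.2 hTm.2
  by_cases hpos : 0 < u T
  · have claim : ∀ x ≤ T, 0 < u x := by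
      intro x hx
      by_contra hle
      push_neg at hle
      have hc : ContinuousOn u (Set.Icc x T) := hcontu.mono (hIcc x hx)
      obtain ⟨z, hz, hz0⟩ := intermediate_value_Icc hx hc ⟨hle, hpos.le⟩
      have := (hT z hz.2).1
      rw [hz0] at this
      simp at this
      linarith
    refine ⟨1, Or.inr rfl, ?_⟩
    refine habsu.congr' (eventually_atBot.2 ⟨T, fun x hx => abs_of_pos (claim x hx)⟩)
  · have hTneg : u T < 0 := by
      rcases lt_trichotomy (u T) 0 with h | h | h
      · exact h
      · exfalso; rw [h] at hTm; simp at hTm; linarith [hTm.1]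
      · exact absurd h hpos
    have claim : ∀ x ≤ T, u x < 0 := by
      intro x hx
      by_contra hle
      push_neg at hle
      have hc : ContinuousOn u (Set.Icc x T) := hcontu.mono (hIcc x hx)
      obtain ⟨z, hz, hz0⟩ := intermediate_value_Icc' hx hc ⟨hTneg.le, hle⟩
      have := (hT z hz.2).1
      rw [hz0] at this
      simp at this
      linarith
    refine ⟨-1, Or.inl rfl, ?_⟩
    have hnegt : Tendsto (fun x => -|u x|) atBot (𝓝 (-1)) := habsu.neg
    refine hnegt.congr' (eventually_atBot.2 ⟨T, fun x hx => ?_⟩)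
    rw [abs_of_neg (claim x hx)]; ring


end
end

section
/- For ε > 0 and t ∈ ℝ define β_ε(t) := inf{Ψ(v) : v ∈ 𝒥'_∞(t), L_v ≤ 1/√ε}, and define β(t) := inf_{v ∈ 𝒥'_∞(t)} Ψ(v). Let ε_n be a sequence of positive reals with ε_n → 0⁺, let t₀ ∈ ℝ, and let t_n → t₀. Then lim_{n→∞} β_{ε_n}(t_n) = β(t₀). -/
open MeasureTheory Set Filter Topology
open scoped ENNReal NNReal

noncomputable section

/-! ### Auxiliary bump function `phiB` -/

def phiB (x : ℝ) : ℝ := (max (1+x) 0)^2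
def phiB' (x : ℝ) : ℝ := 2 * max (1+x) 0
def phiB'' (x : ℝ) : ℝ := if x < -1 then 0 else 2

lemma continuous_phiB : Continuous phiB := by
  unfold phiB; fun_prop

lemma continuous_phiB' : Continuous phiB' := by
  unfold phiB'; fun_prop

lemma phiB_of_le {x : ℝ} (hx : x ≤ -1) : phiB x = 0 := by
  unfold phiB
  rw [max_eq_right (by linarith)]; norm_num

lemma phiB'_of_le {x : ℝ} (hx : x ≤ -1) : phiB' x = 0 := by
  unfold phiB'
  rw [max_eq_right (by linarith)]; norm_num

lemma phiB''_of_le {x : ℝ} (hx : x < -1) : phiB'' x = 0 := if_pos hx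

lemma phiB_of_ge {x : ℝ} (hx : -1 ≤ x) : phiB x = (1+x)^2 := by
  unfold phiB; rw [max_eq_left (by linarith)]

lemma phiB'_of_ge {x : ℝ} (hx : -1 ≤ x) : phiB' x = 2*(1+x) := by
  unfold phiB'; rw [max_eq_left (by linarith)]

lemma phiB''_of_ge {x : ℝ} (hx : -1 ≤ x) : phiB'' x = 2 := if_neg (by linarith)

lemma phiB_nonneg (x : ℝ) : 0 ≤ phiB x := sq_nonneg _

lemma phiB_le_one {x : ℝ} (hx : x ≤ 0) : phiB x ≤ 1 := by
  unfold phiB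
  have h1 : max (1+x) 0 ≤ 1 := max_le (by linarith) zero_le_one
  have h0 : (0:ℝ) ≤ max (1+x) 0 := le_max_right _ _
  nlinarith

lemma hasDerivAt_phiB (x : ℝ) : HasDerivAt phiB (phiB' x) x := by
  rcases lt_trichotomy x (-1) with hx | hx | hx
  · have h0 : HasDerivAt (fun _ : ℝ => (0:ℝ)) 0 x := hasDerivAt_const _ _
    rw [phiB'_of_le hx.le]
    refine h0.congr_of_eventuallyEq ?_
    filter_upwards [Iio_mem_nhds hx] with y hy
    exact (phiB_of_le (le_of_lt hy)).symm ▸ (phiB_of_le hy.le)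
  · subst hx
    rw [phiB'_of_le le_rfl]
    rw [hasDerivAt_iff_isLittleO]
    have : (fun y : ℝ => phiB y - phiB (-1) - (y - (-1)) • (0:ℝ)) = fun y => phiB y := by
      funext y; rw [phiB_of_le le_rfl]; simp
    rw [this]
    rw [Asymptotics.isLittleO_iff]
    intro c hc
    have : ∀ᶠ y : ℝ in 𝓝 (-1), |y + 1| ≤ c := by
      have : Tendsto (fun y : ℝ => |y + 1|) (𝓝 (-1)) (𝓝 |(-1:ℝ) + 1|) :=
        ((continuous_abs.comp (continuous_id.add continuous_const)).tendsto (-1))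
      simp only [neg_add_cancel, abs_zero] at this
      exact this.eventually_le_const hc
    filter_upwards [this] with y hy
    have h1 : phiB y ≤ (1+y)^2 := by
      unfold phiB
      rcases le_or_gt (1+y) 0 with h | h
      · rw [max_eq_right h]; simpa using sq_nonneg (1+y)
      · rw [max_eq_left h.le]
    have h2 : (1+y)^2 = |y+1| * |y+1| := by
      rw [← abs_mul, abs_of_nonneg (by nlinarith [sq_nonneg (y+1)] : (0:ℝ) ≤ (y+1)*(y+1))]
      ring
    simp only [Real.norm_eq_abs]
    rw [abs_of_nonneg (phiB_nonneg y)]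
    calc phiB y ≤ |y+1| * |y+1| := by rw [← h2]; exact h1
    _ ≤ c * |y+1| := by
        apply mul_le_mul_of_nonneg_right hy (abs_nonneg _)
    _ = c * |y - (-1)| := by ring_nf
  · have h0 : HasDerivAt (fun y : ℝ => (1+y)^2) (2*(1+x)) x := by
      have := ((hasDerivAt_id x).const_add 1).fun_pow 2
      simpa using this
    rw [phiB'_of_ge hx.le]
    refine h0.congr_of_eventuallyEq ?_
    filter_upwards [Ioi_mem_nhds hx] with y hy
    exact phiB_of_ge (le_of_lt hy)

lemma hasDerivWithinAt_phiB' (x : ℝ) : HasDerivWithinAt phiB' (phiB'' x) (Ioi x) x := by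
  rcases lt_or_ge x (-1) with hx | hx
  · rw [phiB''_of_le hx]
    have h0 : HasDerivWithinAt (fun _ : ℝ => (0:ℝ)) 0 (Ioi x) x := hasDerivWithinAt_const _ _ _
    refine h0.congr_of_eventuallyEq ?_ (by rw [phiB'_of_le hx.le])
    filter_upwards [nhdsWithin_le_nhds (Iio_mem_nhds hx)] with y hy
    exact phiB'_of_le hy.le
  · rw [phiB''_of_ge hx]
    have h0 : HasDerivWithinAt (fun y : ℝ => 2*(1+y)) 2 (Ioi x) x := by
      have := (((hasDerivAt_id x).const_add 1).const_mul 2).hasDerivWithinAt (s := Ioi x)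
      simpa using this
    refine h0.congr_of_eventuallyEq ?_ (by rw [phiB'_of_ge hx])
    filter_upwards [self_mem_nhdsWithin] with y hy
    exact phiB'_of_ge (le_trans hx (le_of_lt hy))

lemma measurable_phiB'' : Measurable phiB'' := by
  unfold phiB''
  exact Measurable.ite measurableSet_Iio measurable_const measurable_const

lemma intervalIntegrable_phiB'' (x y : ℝ) : IntervalIntegrable phiB'' volume x y := by
  apply intervalIntegrable_iff.2
  apply Measure.integrableOn_of_bounded (M := 2) (by exact (measure_Ioc_lt_top).ne)
  · exact measurable_phiB''.aestronglyMeasurable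
  · apply ae_of_all
    intro z
    unfold phiB''
    rcases lt_or_ge z (-1) with h | h
    · rw [if_pos h]; norm_num
    · rw [if_neg (by linarith)]; norm_num

lemma phiB''_FTC (x y : ℝ) : phiB' y - phiB' x = ∫ t in x..y, phiB'' t := by
  have key : ∀ a b : ℝ, a ≤ b → ∫ t in a..b, phiB'' t = phiB' b - phiB' a := by
    intro a b hab
    exact intervalIntegral.integral_eq_sub_of_hasDeriv_right_of_le hab
      (continuous_phiB'.continuousOn)
      (fun z _ => hasDerivWithinAt_phiB' z)
      (intervalIntegrable_phiB'' a b)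
  rcases le_total x y with h | h
  · rw [key x y h]
  · rw [intervalIntegral.integral_symm, key y x h]; ring

/-! ### Pointwise inequality -/

private lemma aux1 (s X Y : ℝ) (hs : 0 < s) (hs1 : s ≤ 1)
    (hY2 : Y^2 ≤ s^2*(14+4*X^2)) : (X+Y)^2 ≤ (1+9*s)*X^2 + 28*s := by
  have h2XY : 2*X*Y ≤ s*X^2 + s*(14+4*X^2) := by
    nlinarith [sq_nonneg (s*X - Y), hY2, hs, mul_pos hs hs]
  have hY2' : Y^2 ≤ s*(14+4*X^2) := by nlinarith [hY2, sq_nonneg X]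
  nlinarith [h2XY, hY2', sq_nonneg X]

private lemma aux2 (s b d : ℝ) (hs : 0 < s) (hs1 : s ≤ 1) (hds : d^2 = s^2) :
    (b+2*d)^2 ≤ (1+s)*b^2 + 8*s := by
  have h4bd : 4*b*d*s ≤ (s*b^2 + 4*s)*s := by nlinarith [sq_nonneg (s*b - 2*d)]
  have h4bd' : 4*b*d ≤ s*b^2 + 4*s := le_of_mul_le_mul_right (by linarith) hs
  nlinarith

lemma ptwise (a b d p : ℝ) (hd : |d| ≤ 1) (hp0 : 0 ≤ p) (hp1 : p ≤ 1) :
    ((a+d*p)^2-1)^2 + (b+2*d)^2 ≤ (1+9*|d|)*((a^2-1)^2+b^2) + 36*|d| := by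
  rcases eq_or_ne d 0 with rfl | hd0
  · simp
  · have hs : 0 < |d| := abs_pos.2 hd0
    have hds : d^2 = |d|^2 := (sq_abs d).symm
    have hp2 : p^2 ≤ 1 := by nlinarith
    have he2 : (d*p)^2 ≤ |d|^2 := by nlinarith [sq_nonneg d, hp2, sq_nonneg p]
    have ha2 : a^2 ≤ 3/2 + (a^2-1)^2/2 := by nlinarith [sq_nonneg (a^2-1-1)]
    have hsq : (2*a+d*p)^2 ≤ 8*a^2 + 2*(d*p)^2 := by nlinarith [sq_nonneg (2*a-d*p)]
    have hY2 : (d*p*(2*a+d*p))^2 ≤ |d|^2*(14+4*(a^2-1)^2) := by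
      have h1 : (d*p*(2*a+d*p))^2 = (d*p)^2 * (2*a+d*p)^2 := by ring
      have h2 : (d*p)^2 * (2*a+d*p)^2 ≤ |d|^2 * (2*a+d*p)^2 :=
        mul_le_mul_of_nonneg_right he2 (sq_nonneg _)
      have h3 : (2*a+d*p)^2 ≤ 14 + 4*(a^2-1)^2 := by nlinarith [he2, ha2, hsq, hd, hs]
      calc (d*p*(2*a+d*p))^2 = (d*p)^2 * (2*a+d*p)^2 := h1
        _ ≤ |d|^2 * (2*a+d*p)^2 := h2
        _ ≤ |d|^2*(14+4*(a^2-1)^2) := mul_le_mul_of_nonneg_left h3 (sq_nonneg _)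
    have hfirst : ((a+d*p)^2-1)^2 ≤ (1+9*|d|)*(a^2-1)^2 + 28*|d| := by
      have hXY : (a+d*p)^2-1 = (a^2-1) + d*p*(2*a+d*p) := by ring
      rw [hXY]
      exact aux1 |d| (a^2-1) (d*p*(2*a+d*p)) hs hd hY2
    have hsecond := aux2 |d| b d hs hd hds
    nlinarith [hfirst, hsecond, sq_nonneg (a^2-1), sq_nonneg b, hs]

/-! ### Sobolev helpers -/

lemma memtop_intervalIntegrable {u : ℝ → ℝ}
    (h : MemLp u ⊤ (volume.restrict (Iio (0:ℝ)))) {x y : ℝ} (hx : x < 0) (hy : y < 0) :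
    IntervalIntegrable u volume x y := by
  have hsub : uIoc x y ⊆ Iio (0:ℝ) := fun z hz => lt_of_le_of_lt hz.2 (max_lt hx hy)
  have h1 : MemLp u ⊤ ((volume.restrict (Iio (0:ℝ))).restrict (uIoc x y)) := h.restrict _
  rw [Measure.restrict_restrict measurableSet_uIoc, inter_eq_left.2 hsub] at h1
  haveI : IsFiniteMeasure (volume.restrict (uIoc x y)) := by
    constructor
    rw [Measure.restrict_apply_univ]
    exact measure_Ioc_lt_top
  rw [intervalIntegrable_iff]
  exact memLp_one_iff_integrable.1 (h1.mono_exponent le_top)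

lemma memtop_of_bound {c : ℝ} {f : ℝ → ℝ}
    (hm : AEStronglyMeasurable f (volume.restrict (Iio (0:ℝ))))
    (hb : ∀ x < (0:ℝ), |f x| ≤ c) : MemLp f ⊤ (volume.restrict (Iio (0:ℝ))) := by
  refine memLp_top_of_bound hm c ?_
  rw [ae_restrict_iff' measurableSet_Iio]
  exact ae_of_all _ fun x hx => hb x hx

/-! ### The perturbation construction -/

lemma memJInf_pert {t : ℝ} (d : ℝ) {v v' v'' : ℝ → ℝ} (h : MemJInf t v v' v'') :
    MemJInf (t + d) (fun x => v x + d * phiB x) (fun x => v' x + d * phiB' x)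
      (fun x => v'' x + d * phiB'' x) := by
  obtain ⟨⟨hderiv, hFTC, hv, hv', hv''⟩, hlim, L, hL, hvL⟩ := h
  refine ⟨⟨?_, ?_, ?_, ?_, ?_⟩, ?_, max L 1, lt_of_lt_of_le one_pos (le_max_right _ _), ?_⟩
  · intro x hx
    exact (hderiv x hx).add ((hasDerivAt_phiB x).const_mul d)
  · intro x hx y hy hsub
    have hint_v : IntervalIntegrable v'' volume x y := memtop_intervalIntegrable hv'' hx hy
    have hint_p : IntervalIntegrable (fun s => d * phiB'' s) volume x y :=
      (intervalIntegrable_phiB'' x y).const_mul d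
    have h1 := hFTC x hx y hy hsub
    have h2 := phiB''_FTC x y
    rw [intervalIntegral.integral_add hint_v hint_p, intervalIntegral.integral_const_mul]
    linear_combination h1 + d * h2
  · exact hv.add (memtop_of_bound ((continuous_const.mul continuous_phiB).aestronglyMeasurable)
      (fun x hx => by
        rw [abs_mul, abs_of_nonneg (phiB_nonneg x)]
        calc |d| * phiB x ≤ |d| * 1 :=
          mul_le_mul_of_nonneg_left (phiB_le_one hx.le) (abs_nonneg d)
        _ = |d| := mul_one _))
  · refine hv'.add (memtop_of_bound (c := 2*|d|) ((continuous_const.mul continuous_phiB').aestronglyMeasurable)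
      (fun x hx => ?_))
    have h1 : 0 ≤ phiB' x := mul_nonneg (by norm_num) (le_max_right _ _)
    have h2 : phiB' x ≤ 2 := by
      unfold phiB'
      have : max (1+x) 0 ≤ 1 := max_le (by linarith) zero_le_one
      linarith
    rw [abs_mul, abs_of_nonneg h1]
    calc |d| * phiB' x ≤ |d| * 2 := mul_le_mul_of_nonneg_left h2 (abs_nonneg d)
    _ = 2 * |d| := by ring
  · refine hv''.add (memtop_of_bound (c := 2*|d|) ((measurable_phiB''.const_mul d).aestronglyMeasurable)
      (fun x _ => ?_))
    have h1 : 0 ≤ phiB'' x := by unfold phiB''; split <;> norm_num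
    have h2 : phiB'' x ≤ 2 := by unfold phiB''; split <;> norm_num
    rw [abs_mul, abs_of_nonneg h1]
    calc |d| * phiB'' x ≤ |d| * 2 := mul_le_mul_of_nonneg_left h2 (abs_nonneg d)
    _ = 2 * |d| := by ring
  · have h0 : phiB 0 = 1 := by unfold phiB; norm_num
    have hphi : Tendsto (fun x => d * phiB x) (𝓝[<] (0:ℝ)) (𝓝 d) := by
      have hc : Continuous (fun x : ℝ => d * phiB x) := continuous_const.mul continuous_phiB
      have := (hc.tendsto 0).mono_left (nhdsWithin_le_nhds : 𝓝[<] (0:ℝ) ≤ 𝓝 0)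
      simpa [h0] using this
    exact hlim.add hphi
  · intro x hx
    have hx1 : x ≤ -1 := le_trans hx (neg_le_neg (le_max_right L 1))
    have hxL : x ≤ -L := le_trans hx (neg_le_neg (le_max_left L 1))
    show v x + d * phiB x = -1
    rw [phiB_of_le hx1, hvL x hxL]; ring

lemma psi_pert {v v'' : ℝ → ℝ} (d : ℝ) (hd : |d| ≤ 1) :
    PsiE (fun x => v x + d * phiB x) (fun x => v'' x + d * phiB'' x)
      ≤ ENNReal.ofReal (1+9*|d|) * PsiE v v'' + ENNReal.ofReal (36*|d|) := by
  have hne : ∀ᵐ x ∂(volume.restrict (Iio (0:ℝ))), x ≠ (-1:ℝ) := by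
    refine (ae_iff).2 ?_
    have hset : {x : ℝ | ¬ x ≠ -1} = {(-1:ℝ)} := by ext x; simp
    rw [hset, Measure.restrict_apply (measurableSet_singleton _)]
    exact measure_mono_null inter_subset_left Real.volume_singleton
  have key : ∀ᵐ x ∂(volume.restrict (Iio (0:ℝ))),
      ENNReal.ofReal (((v x + d * phiB x)^2-1)^2 + (v'' x + d * phiB'' x)^2)
        ≤ ENNReal.ofReal ((1+9*|d|) * (((v x)^2-1)^2 + (v'' x)^2))
          + (Set.Ioo (-1:ℝ) 0).indicator (fun _ => ENNReal.ofReal (36*|d|)) x := by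
    filter_upwards [hne, ae_restrict_mem measurableSet_Iio] with x hxne hxlt
    rcases hxne.lt_or_gt with h | h
    · rw [phiB_of_le h.le, phiB''_of_le h]
      simp only [mul_zero, add_zero]
      refine le_trans (ENNReal.ofReal_le_ofReal ?_) le_self_add
      nlinarith [abs_nonneg d, sq_nonneg ((v x)^2-1), sq_nonneg (v'' x)]
    · have hx0 : x < 0 := hxlt
      have hmem : x ∈ Set.Ioo (-1:ℝ) 0 := ⟨h, hx0⟩
      rw [Set.indicator_of_mem hmem, phiB_of_ge h.le, phiB''_of_ge h.le]
      have hp0 : (0:ℝ) ≤ (1+x)^2 := sq_nonneg _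
      have hp1 : (1+x)^2 ≤ 1 := by nlinarith
      have hpt := ptwise (v x) (v'' x) d ((1+x)^2) hd hp0 hp1
      rw [← ENNReal.ofReal_add (by positivity) (by positivity)]
      apply ENNReal.ofReal_le_ofReal
      have heq : ((v x + d*(1+x)^2)^2-1)^2 + (v'' x + d*2)^2
          = ((v x + d*(1+x)^2)^2-1)^2 + (v'' x + 2*d)^2 := by ring
      rw [heq]
      exact hpt
  unfold PsiE
  refine le_trans (lintegral_mono_ae key) ?_
  rw [lintegral_add_right _ (measurable_const.indicator measurableSet_Ioo)]
  have h1 : ∫⁻ x in Iio (0:ℝ), ENNReal.ofReal ((1+9*|d|) * (((v x)^2-1)^2 + (v'' x)^2))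
      = ENNReal.ofReal (1+9*|d|) * ∫⁻ x in Iio (0:ℝ), ENNReal.ofReal (((v x)^2-1)^2 + (v'' x)^2) := by
    rw [← lintegral_const_mul' _ _ ENNReal.ofReal_ne_top]
    congr 1
    funext x
    rw [← ENNReal.ofReal_mul (by positivity)]
  have h2 : ∫⁻ x in Iio (0:ℝ),
      (Set.Ioo (-1:ℝ) 0).indicator (fun _ => ENNReal.ofReal (36*|d|)) x
      = ENNReal.ofReal (36*|d|) := by
    rw [lintegral_indicator measurableSet_Ioo, setLIntegral_const,
      Measure.restrict_apply measurableSet_Ioo,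
      inter_eq_left.2 (fun z hz => hz.2), Real.volume_Ioo]
    norm_num
  rw [h1, h2]

lemma memJInf_neg_one : MemJInf (-1) (fun _ => (-1:ℝ)) (fun _ => (0:ℝ)) (fun _ => (0:ℝ)) := by
  refine ⟨⟨fun x _ => hasDerivAt_const _ _, fun x _ y _ _ => by simp, ?_, ?_, ?_⟩,
    tendsto_const_nhds, 1, one_pos, fun _ _ => rfl⟩
  · exact memLp_top_const _
  · exact memLp_top_const _
  · exact memLp_top_const _

lemma psi_base_lt_top (d : ℝ) :
    PsiE (fun x => (fun _ => (-1:ℝ)) x + d * phiB x) (fun x => (fun _ => (0:ℝ)) x + d * phiB'' x) < ⊤ := by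
  have hne : ∀ᵐ x ∂(volume.restrict (Iio (0:ℝ))), x ≠ (-1:ℝ) := by
    refine (ae_iff).2 ?_
    have hset : {x : ℝ | ¬ x ≠ -1} = {(-1:ℝ)} := by ext x; simp
    rw [hset, Measure.restrict_apply (measurableSet_singleton _)]
    exact measure_mono_null inter_subset_left Real.volume_singleton
  set M : ℝ := (((1+|d|)^2+1)^2 + 4*d^2) with hM
  have key : ∀ᵐ x ∂(volume.restrict (Iio (0:ℝ))),
      ENNReal.ofReal ((((-1) + d * phiB x)^2-1)^2 + ((0:ℝ) + d * phiB'' x)^2)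
        ≤ (Set.Ioo (-1:ℝ) 0).indicator (fun _ => ENNReal.ofReal M) x := by
    filter_upwards [hne, ae_restrict_mem measurableSet_Iio] with x hxne hxlt
    rcases hxne.lt_or_gt with h | h
    · rw [phiB_of_le h.le, phiB''_of_le h]
      norm_num
    · have hmem : x ∈ Set.Ioo (-1:ℝ) 0 := ⟨h, hxlt⟩
      rw [Set.indicator_of_mem hmem, phiB_of_ge h.le, phiB''_of_ge h.le]
      apply ENNReal.ofReal_le_ofReal
      have hp0 : (0:ℝ) ≤ (1+x)^2 := sq_nonneg _
      have hp1 : (1+x)^2 ≤ 1 := by nlinarith [hxlt.out]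
      have hb : |(-1:ℝ) + d*(1+x)^2| ≤ 1 + |d| := by
        calc |(-1:ℝ) + d*(1+x)^2| ≤ |(-1:ℝ)| + |d*(1+x)^2| := abs_add_le _ _
        _ ≤ 1 + |d| := by
            rw [abs_neg, abs_one, abs_mul]
            have : |(1+x)^2| ≤ 1 := by rw [abs_of_nonneg hp0]; exact hp1
            nlinarith [abs_nonneg d, abs_nonneg ((1+x)^2)]
      have hsq : ((-1:ℝ) + d*(1+x)^2)^2 ≤ (1+|d|)^2 := by
        have := abs_nonneg ((-1:ℝ) + d*(1+x)^2)
        nlinarith [sq_abs ((-1:ℝ) + d*(1+x)^2)]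
      rw [hM]
      nlinarith [sq_nonneg ((-1:ℝ) + d*(1+x)^2), sq_nonneg (1+|d|), abs_nonneg d,
        sq_nonneg (((-1:ℝ) + d*(1+x)^2)^2 - 1)]
  calc PsiE (fun x => (fun _ => (-1:ℝ)) x + d * phiB x)
        (fun x => (fun _ => (0:ℝ)) x + d * phiB'' x)
      ≤ ∫⁻ x in Iio (0:ℝ), (Set.Ioo (-1:ℝ) 0).indicator (fun _ => ENNReal.ofReal M) x := by
        unfold PsiE
        exact lintegral_mono_ae key
    _ = ENNReal.ofReal M := by
        rw [lintegral_indicator measurableSet_Ioo, setLIntegral_const,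
          Measure.restrict_apply measurableSet_Ioo,
          inter_eq_left.2 (fun z hz => hz.2), Real.volume_Ioo]
        norm_num
    _ < ⊤ := ENNReal.ofReal_lt_top

lemma psiVals_exists_finite (t : ℝ) : ∃ r ∈ PsiVals t, r < ⊤ := by
  have hm := memJInf_pert (t + 1) memJInf_neg_one
  rw [show (-1) + (t + 1) = t by ring] at hm
  exact ⟨_, ⟨_, _, _, hm, rfl⟩, psi_base_lt_top (t+1)⟩

/-- Convergence of the truncated infima `β_ε`.
With `β_ε(t) = inf{Ψ(v) : v ∈ 𝒥'_∞(t), L_v ≤ 1/√ε}` and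
`β(t) = inf_{v ∈ 𝒥'_∞(t)} Ψ(v)`, if `εₙ → 0⁺` and `tₙ → t₀` then
`β_{εₙ}(tₙ) → β(t₀)`. -/
theorem statement_17 (ε : ℕ → ℝ) (hεpos : ∀ n, 0 < ε n)
    (hε0 : Tendsto ε atTop (𝓝 0))
    (t₀ : ℝ) (t : ℕ → ℝ) (ht : Tendsto t atTop (𝓝 t₀)) :
    Tendsto (fun n => sInf (PsiValsL (t n) (1 / Real.sqrt (ε n)))) atTop
      (𝓝 (sInf (PsiVals t₀))) := by
  set D : ℕ → ℝ := fun n => t n - t₀ with hD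
  have hBfin : sInf (PsiVals t₀) < ⊤ := by
    obtain ⟨r, hr, hrt⟩ := psiVals_exists_finite t₀
    exact lt_of_le_of_lt (sInf_le hr) hrt
  have habs : Tendsto (fun n => |D n|) atTop (𝓝 0) := by
    have : Tendsto D atTop (𝓝 0) := by simpa [hD] using ht.sub_const t₀
    simpa using this.abs
  have hd1 : ∀ᶠ n in atTop, |D n| ≤ 1 := habs.eventually_le_const one_pos
  have hLbig : Tendsto (fun n => 1 / Real.sqrt (ε n)) atTop atTop := by
    have hsq : Tendsto (fun n => Real.sqrt (ε n)) atTop (𝓝[>] 0) := by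
      rw [tendsto_nhdsWithin_iff]
      constructor
      · have := (Real.continuous_sqrt.tendsto 0).comp hε0
        simpa [Real.sqrt_zero, Function.comp_def] using this
      · exact Eventually.of_forall fun n => Real.sqrt_pos.2 (hεpos n)
    simpa [one_div, Pi.inv_def] using hsq.inv_tendsto_nhdsGT_zero
  have hcoef : ∀ r : ℝ≥0∞, r ≠ ⊤ →
      Tendsto (fun n => ENNReal.ofReal (1+9*|D n|) * r + ENNReal.ofReal (36*|D n|))
        atTop (𝓝 r) := by
    intro r hr
    have h1 : Tendsto (fun n => ENNReal.ofReal (1+9*|D n|)) atTop (𝓝 1) := by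
      have hr1 : Tendsto (fun n => 1+9*|D n|) atTop (𝓝 1) := by
        have := (habs.const_mul 9).const_add 1
        simpa using this
      have := ENNReal.tendsto_ofReal hr1
      simpa [ENNReal.ofReal_one] using this
    have h2 : Tendsto (fun n => ENNReal.ofReal (36*|D n|)) atTop (𝓝 0) := by
      have hr2 : Tendsto (fun n => 36*|D n|) atTop (𝓝 0) := by
        have := habs.const_mul 36
        simpa using this
      have := ENNReal.tendsto_ofReal hr2
      simpa [ENNReal.ofReal_zero] using this
    have := (ENNReal.Tendsto.mul_const (b := r) h1 (Or.inl one_ne_zero)).add h2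
    simpa using this
  refine tendsto_order.2 ⟨?_, ?_⟩
  · -- lower bound
    intro a ha
    obtain ⟨a', ha1, ha2⟩ := exists_between ha
    have ha'top : a' ≠ ⊤ := ha2.ne_top
    have hev : ∀ᶠ n in atTop,
        ENNReal.ofReal (1+9*|D n|) * a' + ENNReal.ofReal (36*|D n|) < sInf (PsiVals t₀) :=
      (hcoef a' ha'top).eventually_lt_const ha2
    filter_upwards [hev, hd1] with n hn hdn
    have hsub : sInf (PsiVals (t n)) ≤ sInf (PsiValsL (t n) (1 / Real.sqrt (ε n))) := by
      apply sInf_le_sInf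
      rintro r ⟨v, v', v'', hm, _, hr⟩
      exact ⟨v, v', v'', hm, hr⟩
    have hge : a' ≤ sInf (PsiVals (t n)) := by
      apply le_sInf
      rintro r ⟨v, v', v'', hm, rfl⟩
      by_contra hlt
      push_neg at hlt
      have hmw := memJInf_pert (t₀ - t n) hm
      rw [show t n + (t₀ - t n) = t₀ by ring] at hmw
      have habs' : |t₀ - t n| = |D n| := by rw [hD]; exact abs_sub_comm _ _
      have hb := psi_pert (v := v) (v'' := v'') (t₀ - t n) (by rw [habs']; exact hdn)
      rw [habs'] at hb
      have hmem : PsiE (fun x => v x + (t₀ - t n) * phiB x)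
          (fun x => v'' x + (t₀ - t n) * phiB'' x) ∈ PsiVals t₀ := ⟨_, _, _, hmw, rfl⟩
      have hchain : sInf (PsiVals t₀)
          ≤ ENNReal.ofReal (1+9*|D n|) * a' + ENNReal.ofReal (36*|D n|) := by
        refine le_trans (sInf_le hmem) (le_trans hb ?_)
        exact add_le_add (mul_le_mul_right hlt.le _) le_rfl
      exact absurd (lt_of_le_of_lt hchain hn) (lt_irrefl _)
    exact lt_of_lt_of_le ha1 (le_trans hge hsub)
  · -- upper bound
    intro b hb
    have hBb : sInf (PsiVals t₀) < min b (sInf (PsiVals t₀) + 1) :=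
      lt_min hb (ENNReal.lt_add_right hBfin.ne one_ne_zero)
    obtain ⟨r, hrmem, hrlt⟩ := sInf_lt_iff.1 hBb
    have hrb : r < b := lt_of_lt_of_le hrlt (min_le_left _ _)
    have hrtop : r ≠ ⊤ := by
      have h' : r < sInf (PsiVals t₀) + 1 := lt_of_lt_of_le hrlt (min_le_right _ _)
      exact (h'.trans (ENNReal.add_lt_top.2 ⟨hBfin, ENNReal.one_lt_top⟩)).ne
    obtain ⟨v, v', v'', hm, rfl⟩ := hrmem
    obtain ⟨-, -, L, hL, hvL⟩ := id hm
    have hev1 : ∀ᶠ n in atTop, max L 1 ≤ 1 / Real.sqrt (ε n) :=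
      hLbig.eventually_ge_atTop _
    have hev2 : ∀ᶠ n in atTop,
        ENNReal.ofReal (1+9*|D n|) * PsiE v v'' + ENNReal.ofReal (36*|D n|) < b :=
      (hcoef _ hrtop).eventually_lt_const hrb
    filter_upwards [hev1, hev2, hd1] with n h1 h2 hdn
    have hmw := memJInf_pert (t n - t₀) hm
    rw [show t₀ + (t n - t₀) = t n by ring] at hmw
    have hLw : ∀ x ≤ -(1 / Real.sqrt (ε n)),
        (fun x => v x + (t n - t₀) * phiB x) x = -1 := by
      intro x hx
      have hx1 : x ≤ -1 :=
        le_trans hx (neg_le_neg (le_trans (le_max_right L 1) h1))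
      have hxL : x ≤ -L :=
        le_trans hx (neg_le_neg (le_trans (le_max_left L 1) h1))
      show v x + (t n - t₀) * phiB x = -1
      rw [phiB_of_le hx1, hvL x hxL]; ring
    have hmem : PsiE (fun x => v x + (t n - t₀) * phiB x)
        (fun x => v'' x + (t n - t₀) * phiB'' x)
        ∈ PsiValsL (t n) (1 / Real.sqrt (ε n)) := ⟨_, _, _, hmw, hLw, rfl⟩
    calc sInf (PsiValsL (t n) (1 / Real.sqrt (ε n)))
        ≤ PsiE (fun x => v x + (t n - t₀) * phiB x)
            (fun x => v'' x + (t n - t₀) * phiB'' x) := sInf_le hmem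
      _ ≤ ENNReal.ofReal (1+9*|t n - t₀|) * PsiE v v'' + ENNReal.ofReal (36*|t n - t₀|) :=
          psi_pert _ hdn
      _ < b := h2


end
end
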